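/- arXiv:2404.17863 — 10 statements merged into one kernel-verified Lean document; each statement's English description precedes it below -/
import Mathlib

section
/- Suppose θ = (1/π)·arg(q) is irrational (in particular q is not real). Then the center of 𝒜 is trivial: every element T ∈ 𝒜 that commutes with all elements of 𝒜 is a scalar multiple of the identity operator. -/
open scoped InnerProductSpace
noncomputable section

/-- The Hilbert space `H = ℓ²(ℕ × ℤ × ℤ)`. -/
abbrev UqH : Type := lp (fun _ : ℕ × ℤ × ℤ => ℂ) 2

/-- The standard orthonormal basis vectors `e_{i,j,k}` of `H`. -/
def e (i : ℕ) (j k : ℤ) : UqH := lp.single 2 (i, j, k) 1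

/-!
Let `V e_{i,j,k} = e^{-2πiθk} e_{i,j+1,k}` and `W e_{i,j,k} = e_{i,j,k+1}`. These are unitaries
commuting with `A`, `B` and `D`, and the commutant of a set of unitaries is a norm-closed
star-subalgebra, so all of `𝒜` commutes with `V` and `W`. A central `T ∈ 𝒜` thus commutes with
five weighted shifts of the basis `e_{i,j,k}`. Comparing matrix entries of `T` against `B` and `V`
(both shifting `j`, with weights `q^i` and `e^{-2πiθk}`) and against `D` and `W` (both shifting
`k`, with weights `e^{-2πiθj}` and `1`) shows that `T` is diagonal: as `0 < |q| < 1` and `θ` is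
irrational, `(i, j, k) ↦ (q^i e^{2πiθk}, e^{-2πiθj})` is injective. Commuting with `A`, `B`, `W`,
whose weights never vanish, then makes the diagonal constant.
-/

namespace lp

variable {ι 𝕜 : Type*} [RCLike 𝕜]

def mulComp (w : ι → 𝕜) (τ : ι ≃ ι) (hw : ∀ i, ‖w i‖ = 1) : ℓ²(ι, 𝕜) →ₗᵢ[𝕜] ℓ²(ι, 𝕜) where
  toFun f := ⟨fun i => w i * f (τ i), memℓp_gen <| by
    simp only [norm_mul, hw, one_mul]
    exact τ.summable_iff.mpr ((lp.memℓp f).summable (by norm_num))⟩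
  map_add' f g := by ext i; exact mul_add _ _ _
  map_smul' c f := by ext i; simp [mul_left_comm]
  norm_map' f := by
    simp only [LinearMap.coe_mk, AddHom.coe_mk,
      lp.norm_eq_tsum_rpow (by norm_num : 0 < (2 : ENNReal).toReal), norm_mul, hw, one_mul]
    rw [τ.tsum_eq (fun i => ‖f i‖ ^ (2 : ENNReal).toReal)]

@[simp]
theorem coe_mulComp (w : ι → 𝕜) (τ : ι ≃ ι) (hw : ∀ i, ‖w i‖ = 1) (f : ℓ²(ι, 𝕜)) :
    ⇑(mulComp w τ hw f) = fun i => w i * f (τ i) := rfl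

def weightedPerm (σ : ι ≃ ι) (u : ι → 𝕜) (hu : ∀ i, ‖u i‖ = 1) :
    ℓ²(ι, 𝕜) ≃ₗᵢ[𝕜] ℓ²(ι, 𝕜) :=
  have hu0 : ∀ i, u i ≠ 0 := fun i => norm_ne_zero_iff.mp (by simp [hu])
  { mulComp (fun i => u (σ.symm i)) σ.symm (fun i => hu _) with
    invFun := mulComp (fun i => (u i)⁻¹) σ (fun i => by rw [norm_inv, hu, inv_one])
    left_inv f := by ext i; simp [hu0]
    right_inv f := by ext i; simp [hu0] }

variable [DecidableEq ι]

theorem ext_single {F : Type*} [AddCommMonoid F] [Module 𝕜 F] [TopologicalSpace F] [T2Space F]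
    {f g : ℓ²(ι, 𝕜) →L[𝕜] F} (h : ∀ i, f (lp.single 2 i 1) = g (lp.single 2 i 1)) : f = g :=
  ext_continuousLinearMap (by norm_num) fun i => ContinuousLinearMap.ext_ring (h i)

theorem weightedPerm_single (σ : ι ≃ ι) (u : ι → 𝕜) (hu : ∀ i, ‖u i‖ = 1) (i : ι) :
    weightedPerm σ u hu (lp.single 2 i 1) = u i • lp.single 2 (σ i) 1 := by
  ext j
  by_cases h : j = σ i <;> simp [weightedPerm, lp.single_apply, Equiv.symm_apply_eq, h]

def IsWeightedShift (S : ℓ²(ι, 𝕜) →L[𝕜] ℓ²(ι, 𝕜)) (σ : ι → ι) (c : ι → 𝕜) : Prop :=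
  ∀ i, S (lp.single 2 i 1) = c i • lp.single 2 (σ i) 1

namespace IsWeightedShift

variable {S S' T : ℓ²(ι, 𝕜) →L[𝕜] ℓ²(ι, 𝕜)} {σ σ' : ι → ι} {c c' : ι → 𝕜}

theorem weightedPerm (σ : ι ≃ ι) (u : ι → 𝕜) (hu : ∀ i, ‖u i‖ = 1) :
    IsWeightedShift (lp.weightedPerm σ u hu : ℓ²(ι, 𝕜) →L[𝕜] ℓ²(ι, 𝕜)) σ u :=
  weightedPerm_single σ u hu

theorem apply_apply (hS : IsWeightedShift S σ c) (hσ : σ.Injective) (x : ℓ²(ι, 𝕜)) (i : ι) :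
    S x (σ i) = c i * x i := by
  suffices (evalCLM 𝕜 (fun _ => 𝕜) 2 (σ i)).comp S = c i • evalCLM 𝕜 (fun _ => 𝕜) 2 i from
    congr($this x)
  refine ext_single fun j => ?_
  by_cases h : j = i
  · subst h; simp [evalCLM, hS j]
  · simp [evalCLM, hS j, hσ.ne (Ne.symm h), Ne.symm h]

theorem commute (hS : IsWeightedShift S σ c) (hS' : IsWeightedShift S' σ' c')
    (hσ : ∀ i, σ (σ' i) = σ' (σ i)) (hc : ∀ i, c' i * c (σ' i) = c i * c' (σ i)) :
    Commute S S' := by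
  refine ext_single fun i => ?_
  simp only [mul_apply_eq_comp, hS i, hS' i, map_smul, hS (σ' i), hS' (σ i), smul_smul, hσ, hc]

theorem apply_single_map_apply_map (hS : IsWeightedShift S σ c) (hσ : σ.Injective)
    (hT : Commute T S) (i j : ι) :
    c i * T (lp.single 2 (σ i) 1) (σ j) = c j * T (lp.single 2 i 1) j := by
  have := congr($(hT.eq) (lp.single 2 i 1) (σ j))
  simpa [hS i, hS.apply_apply hσ] using this

theorem apply_single_apply_eq_zero (hS : IsWeightedShift S σ c) (hS' : IsWeightedShift S' σ c')
    (hσ : σ.Injective) (hT : Commute T S) (hT' : Commute T S') {i j : ι}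
    (h : c i * c' j ≠ c j * c' i) : T (lp.single 2 i 1) j = 0 := by
  have h₁ := hS.apply_single_map_apply_map hσ hT i j
  have h₂ := hS'.apply_single_map_apply_map hσ hT' i j
  refine (mul_eq_zero.mp ?_).resolve_left (sub_ne_zero.mpr h)
  linear_combination c' i * h₁ - c i * h₂

theorem apply_single_apply_self (hS : IsWeightedShift S σ c) (hσ : σ.Injective)
    (hT : Commute T S) {i : ι} (hc : c i ≠ 0) :
    T (lp.single 2 (σ i) 1) (σ i) = T (lp.single 2 i 1) i :=
  mul_left_cancel₀ hc (hS.apply_single_map_apply_map hσ hT i i)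

end IsWeightedShift

theorem eq_smul_one_of_apply_single {T : ℓ²(ι, 𝕜) →L[𝕜] ℓ²(ι, 𝕜)} {a : 𝕜}
    (hoff : ∀ i j, i ≠ j → T (lp.single 2 i 1) j = 0) (hdiag : ∀ i, T (lp.single 2 i 1) i = a) :
    T = a • 1 := by
  refine ext_single fun i => lp.ext (funext fun j => ?_)
  by_cases h : i = j
  · subst h; simp [hdiag]
  · simp [hoff i j h, lp.single_apply, Ne.symm h]

end lp

theorem Commute.star_left_of_mem_unitary {R : Type*} [Monoid R] [StarMul R] {u x : R}
    (hu : u ∈ unitary R) (h : Commute u x) : Commute (star u) x :=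
  Commute.units_inv_left (u := Unitary.toUnits ⟨u, hu⟩) h

theorem StarAlgebra.topologicalClosure_adjoin_le_centralizer {R A : Type*} [CommSemiring R]
    [StarRing R] [TopologicalSpace A] [Semiring A] [Algebra R A] [StarRing A] [StarModule R A]
    [IsSemitopologicalSemiring A] [ContinuousStar A] [T2Space A] {s t : Set A}
    (ht : t ⊆ unitary A) (hst : ∀ u ∈ t, ∀ a ∈ s, Commute u a) :
    (adjoin R s).topologicalClosure ≤ StarSubalgebra.centralizer R t :=
  StarSubalgebra.topologicalClosure_minimal
    (adjoin_le fun a ha => (StarSubalgebra.mem_centralizer_iff R).mpr fun u hu =>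
      ⟨(hst u hu a ha).eq, ((hst u hu a ha).star_left_of_mem_unitary (ht hu)).eq⟩)
    (Set.isClosed_centralizer _)

namespace UqTwo

open lp

def phase (θ : ℝ) (n : ℤ) : ℂ :=
  Complex.exp (-(2 * (Real.pi : ℂ) * (θ : ℂ) * (n : ℂ)) * Complex.I)

theorem norm_phase (θ : ℝ) (n : ℤ) : ‖phase θ n‖ = 1 := by
  rw [phase, Complex.norm_exp]
  simp

theorem phase_add (θ : ℝ) (m n : ℤ) : phase θ (m + n) = phase θ m * phase θ n := by
  rw [phase, phase, phase, ← Complex.exp_add]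
  push_cast
  ring_nf

theorem phase_injective {θ : ℝ} (hθ : Irrational θ) : Function.Injective (phase θ) := by
  intro m n h
  obtain ⟨N, hN⟩ := Complex.exp_eq_exp_iff_exists_int.mp h
  by_contra hmn
  have h2πI : 2 * (Real.pi : ℂ) * Complex.I ≠ 0 := by simp [Real.pi_ne_zero]
  have hN' : (((n - m : ℤ) * θ : ℝ) : ℂ) = ((N : ℝ) : ℂ) := by
    refine mul_left_cancel₀ h2πI ?_
    push_cast
    linear_combination hN
  exact (hθ.intCast_mul (sub_ne_zero.mpr (Ne.symm hmn))).ne_int N (by exact_mod_cast hN')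

theorem pow_mul_phase_injective {q : ℂ} (hq0 : 0 < ‖q‖) (hq1 : ‖q‖ < 1) {θ : ℝ}
    (hθ : Irrational θ) {i i' : ℕ} {k k' : ℤ} (h : q ^ i * phase θ k = q ^ i' * phase θ k') :
    i = i' ∧ k = k' := by
  have hi : i = i' := pow_right_injective₀ hq0 hq1.ne (by simpa [norm_phase] using congr(‖$h‖))
  subst hi
  exact ⟨rfl, phase_injective hθ (mul_left_cancel₀ (pow_ne_zero _ (norm_pos_iff.mp hq0)) h)⟩

def shiftI (p : ℕ × ℤ × ℤ) : ℕ × ℤ × ℤ := (p.1 + 1, p.2.1, p.2.2)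

def shiftJ : ℕ × ℤ × ℤ ≃ ℕ × ℤ × ℤ :=
  (Equiv.refl ℕ).prodCongr ((Equiv.addRight 1).prodCongr (Equiv.refl ℤ))

def shiftK : ℕ × ℤ × ℤ ≃ ℕ × ℤ × ℤ :=
  (Equiv.refl ℕ).prodCongr ((Equiv.refl ℤ).prodCongr (Equiv.addRight 1))

@[simp] theorem shiftI_apply (i : ℕ) (j k : ℤ) : shiftI (i, j, k) = (i + 1, j, k) := rfl
@[simp] theorem shiftJ_apply (i : ℕ) (j k : ℤ) : shiftJ (i, j, k) = (i, j + 1, k) := rfl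
@[simp] theorem shiftK_apply (i : ℕ) (j k : ℤ) : shiftK (i, j, k) = (i, j, k + 1) := rfl

theorem shiftI_injective : shiftI.Injective := by
  rintro ⟨i, j, k⟩ ⟨i', j', k'⟩ h
  simpa [shiftI] using h

def V (θ : ℝ) : UqH →L[ℂ] UqH :=
  weightedPerm shiftJ (fun p => phase θ p.2.2) fun _ => norm_phase _ _

def W : UqH →L[ℂ] UqH :=
  weightedPerm shiftK (fun _ => (1 : ℂ)) fun _ => norm_one

theorem isWeightedShift_V (θ : ℝ) : IsWeightedShift (V θ) shiftJ fun p => phase θ p.2.2 :=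
  IsWeightedShift.weightedPerm _ _ _

theorem isWeightedShift_W : IsWeightedShift W shiftK fun _ => 1 :=
  IsWeightedShift.weightedPerm _ _ _

theorem V_mem_unitary (θ : ℝ) : V θ ∈ unitary (UqH →L[ℂ] UqH) :=
  (Unitary.linearIsometryEquiv.symm _).prop

theorem W_mem_unitary : W ∈ unitary (UqH →L[ℂ] UqH) :=
  (Unitary.linearIsometryEquiv.symm _).prop

variable {θ : ℝ} {q : ℂ} {A B D T : UqH →L[ℂ] UqH} {a b : ℕ → ℂ}

theorem topologicalClosure_adjoin_le_centralizer (hA : IsWeightedShift A shiftI fun p => a p.1)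
    (hB : IsWeightedShift B shiftJ fun p => b p.1)
    (hD : IsWeightedShift D shiftK fun p => phase θ p.2.1) :
    (StarAlgebra.adjoin ℂ {A, B, D}).topologicalClosure ≤
      StarSubalgebra.centralizer ℂ {V θ, W} := by
  refine StarAlgebra.topologicalClosure_adjoin_le_centralizer ?_ ?_
  · rintro _ (rfl | rfl)
    exacts [V_mem_unitary θ, W_mem_unitary]
  · rintro _ (rfl | rfl) _ (rfl | rfl | rfl)
    · exact (isWeightedShift_V θ).commute hA (fun _ => rfl) fun _ => mul_comm _ _
    · exact (isWeightedShift_V θ).commute hB (fun _ => rfl) fun _ => mul_comm _ _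
    · refine (isWeightedShift_V θ).commute hD (fun _ => rfl) fun ⟨i, j, k⟩ => ?_
      simp only [shiftJ_apply, shiftK_apply, phase_add]
      ring
    · exact isWeightedShift_W.commute hA (fun _ => rfl) fun _ => mul_comm _ _
    · exact isWeightedShift_W.commute hB (fun _ => rfl) fun _ => mul_comm _ _
    · exact isWeightedShift_W.commute hD (fun _ => rfl) fun _ => mul_comm _ _

theorem apply_single_apply_eq_zero_of_ne (hq0 : 0 < ‖q‖) (hq1 : ‖q‖ < 1) (hθ : Irrational θ)
    (hB : IsWeightedShift B shiftJ fun p => q ^ p.1)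
    (hD : IsWeightedShift D shiftK fun p => phase θ p.2.1)
    (hTB : Commute T B) (hTD : Commute T D) (hTV : Commute T (V θ)) (hTW : Commute T W)
    {p p' : ℕ × ℤ × ℤ} (h : p ≠ p') : T (lp.single 2 p 1) p' = 0 := by
  obtain ⟨i, j, k⟩ := p
  obtain ⟨i', j', k'⟩ := p'
  by_cases hj : j = j'
  · subst hj
    refine hB.apply_single_apply_eq_zero (isWeightedShift_V θ) shiftJ.injective hTB hTV
      fun h' => h ?_
    obtain ⟨rfl, rfl⟩ := pow_mul_phase_injective (k := k') (k' := k) hq0 hq1 hθ h'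
    rfl
  · refine hD.apply_single_apply_eq_zero isWeightedShift_W shiftK.injective hTD hTW ?_
    simpa using (phase_injective hθ).ne hj

theorem apply_single_apply_self_eq_origin (ha : ∀ i, a i ≠ 0)
    (hA : IsWeightedShift A shiftI fun p => a p.1)
    (hB : IsWeightedShift B shiftJ fun p => q ^ p.1)
    (hTA : Commute T A) (hTB : Commute T B) (hTW : Commute T W) (p : ℕ × ℤ × ℤ) :
    T (lp.single 2 p 1) p = T (lp.single 2 (0, 0, 0) 1) (0, 0, 0) := by
  set d : ℕ × ℤ × ℤ → ℂ := fun p => T (lp.single 2 p 1) p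
  have hi : ∀ j k, Function.Periodic (fun i => d (i, j, k)) 1 := fun j k i =>
    hA.apply_single_apply_self (i := (i, j, k)) shiftI_injective hTA (ha i)
  have hj : ∀ k, Function.Periodic (fun j => d (0, j, k)) 1 := fun k j =>
    hB.apply_single_apply_self (i := (0, j, k)) shiftJ.injective hTB (by simp)
  have hk : Function.Periodic (fun k => d (0, 0, k)) 1 := fun k =>
    isWeightedShift_W.apply_single_apply_self (i := (0, 0, k)) shiftK.injective hTW one_ne_zero
  obtain ⟨i, j, k⟩ := p
  calc d (i, j, k) = d (0, j, k) := by simpa using (hi j k).nat_mul_eq i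
    _ = d (0, 0, k) := by simpa using (hj k).int_mul_eq j
    _ = d (0, 0, 0) := by simpa using hk.int_mul_eq k

theorem eq_smul_one_of_commute (hq0 : 0 < ‖q‖) (hq1 : ‖q‖ < 1) (hθ : Irrational θ)
    (ha : ∀ i, a i ≠ 0) (hA : IsWeightedShift A shiftI fun p => a p.1)
    (hB : IsWeightedShift B shiftJ fun p => q ^ p.1)
    (hD : IsWeightedShift D shiftK fun p => phase θ p.2.1)
    (hTA : Commute T A) (hTB : Commute T B) (hTD : Commute T D) (hTV : Commute T (V θ))
    (hTW : Commute T W) : T = T (lp.single 2 (0, 0, 0) 1) (0, 0, 0) • 1 :=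
  eq_smul_one_of_apply_single
    (fun _ _ h => apply_single_apply_eq_zero_of_ne hq0 hq1 hθ hB hD hTB hTD hTV hTW h)
    (apply_single_apply_self_eq_origin ha hA hB hTA hTB hTW)

end UqTwo

open UqTwo

theorem center_trivial_of_irrational_general
    (q : ℂ) (hq0 : 0 < ‖q‖) (hq1 : ‖q‖ < 1)
    (θ : ℝ) (hirr : Irrational θ)
    (A B D : UqH →L[ℂ] UqH)
    (hA : ∀ (i : ℕ) (j k : ℤ),
      A (e i j k) = ((Real.sqrt (1 - ‖q‖ ^ (2 * (i + 1))) : ℝ) : ℂ) • e (i + 1) j k)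
    (hB : ∀ (i : ℕ) (j k : ℤ), B (e i j k) = (q ^ i) • e i (j + 1) k)
    (hD : ∀ (i : ℕ) (j k : ℤ),
      D (e i j k) = Complex.exp (-(2 * (Real.pi : ℂ) * (θ : ℂ) * (j : ℂ)) * Complex.I) • e i j (k + 1))
    (𝒜 : StarSubalgebra ℂ (UqH →L[ℂ] UqH))
    (h𝒜 : 𝒜 = (StarAlgebra.adjoin ℂ ({A, B, D} : Set (UqH →L[ℂ] UqH))).topologicalClosure) :
    ∀ T ∈ 𝒜, (∀ S ∈ 𝒜, T * S = S * T) → ∃ c : ℂ, T = c • (1 : UqH →L[ℂ] UqH) := by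
  intro T hT hcentral
  let a : ℕ → ℂ := fun i => ((√(1 - ‖q‖ ^ (2 * (i + 1))) : ℝ) : ℂ)
  have hA' : lp.IsWeightedShift A shiftI fun p => a p.1 := fun _ => hA _ _ _
  have hB' : lp.IsWeightedShift B shiftJ fun p => q ^ p.1 := fun _ => hB _ _ _
  have hD' : lp.IsWeightedShift D shiftK fun p => phase θ p.2.1 := fun _ => hD _ _ _
  have hgen : ∀ X ∈ ({A, B, D} : Set (UqH →L[ℂ] UqH)), Commute T X := fun X hX =>
    hcentral X (h𝒜 ▸ StarSubalgebra.le_topologicalClosure _ (StarAlgebra.subset_adjoin ℂ _ hX))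
  have hVW := (StarSubalgebra.mem_centralizer_iff ℂ).mp
    (topologicalClosure_adjoin_le_centralizer hA' hB' hD' (h𝒜 ▸ hT))
  have ha : ∀ i, a i ≠ 0 := fun i => Complex.ofReal_ne_zero.mpr
    (Real.sqrt_pos.mpr (sub_pos.mpr (pow_lt_one₀ (norm_nonneg q) hq1 (by omega)))).ne'
  exact ⟨_, eq_smul_one_of_commute hq0 hq1 hirr ha hA' hB' hD' (hgen A (by simp))
    (hgen B (by simp)) (hgen D (by simp)) (hVW _ (by simp)).1.symm (hVW _ (by simp)).1.symm⟩

/-- if `θ = arg(q)/π` is irrational, then the center of the C*-algebra `𝒜`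
generated by `A`, `B`, `D` (the image of `C(U_q(2))` under the faithful representation) is
trivial: every `T ∈ 𝒜` commuting with all of `𝒜` is a scalar multiple of the identity. -/
theorem center_trivial_of_irrational
    (q : ℂ) (hq0 : 0 < ‖q‖) (hq1 : ‖q‖ < 1)
    (θ : ℝ) (hθ : θ = Complex.arg q / Real.pi) (hirr : Irrational θ)
    (A B D : UqH →L[ℂ] UqH)
    (hA : ∀ (i : ℕ) (j k : ℤ),
      A (e i j k) = ((Real.sqrt (1 - ‖q‖ ^ (2 * (i + 1))) : ℝ) : ℂ) • e (i + 1) j k)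
    (hB : ∀ (i : ℕ) (j k : ℤ), B (e i j k) = (q ^ i) • e i (j + 1) k)
    (hD : ∀ (i : ℕ) (j k : ℤ),
      D (e i j k) = Complex.exp (-(2 * (Real.pi : ℂ) * (θ : ℂ) * (j : ℂ)) * Complex.I) • e i j (k + 1))
    (hAs : ∀ (i : ℕ) (j k : ℤ),
      (star A) (e i j k) = ((Real.sqrt (1 - ‖q‖ ^ (2 * i)) : ℝ) : ℂ) • e (i - 1) j k)
    (hBs : ∀ (i : ℕ) (j k : ℤ), (star B) (e i j k) = ((starRingEnd ℂ) q ^ i) • e i (j - 1) k)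
    (hDs : ∀ (i : ℕ) (j k : ℤ),
      (star D) (e i j k) = Complex.exp ((2 * (Real.pi : ℂ) * (θ : ℂ) * (j : ℂ)) * Complex.I) • e i j (k - 1))
    (𝒜 : StarSubalgebra ℂ (UqH →L[ℂ] UqH))
    (h𝒜 : 𝒜 = (StarAlgebra.adjoin ℂ ({A, B, D} : Set (UqH →L[ℂ] UqH))).topologicalClosure) :
    ∀ T ∈ 𝒜, (∀ S ∈ 𝒜, T * S = S * T) → ∃ c : ℂ, T = c • (1 : UqH →L[ℂ] UqH) :=
  center_trivial_of_irrational_general q hq0 hq1 θ hirr A B D hA hB hD 𝒜 h𝒜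
end
end

section
/- Suppose q is not real and θ = (1/π)·arg(q) is irrational, and let q′ ∈ ℝ with 0 < |q′| < 1. Then the C*-algebras 𝒜_q and 𝒜_{q′} are non-isomorphic: there is no star-algebra isomorphism (over ℂ) between 𝒜_q and 𝒜_{q′}. -/
/-!
For real `q'` the phase `θ'` is an integer, so `D'` is the plain shift `e_{i,j,k} ↦ e_{i,j,k+1}`.
It commutes with `A'`, `B'`, `D'` and their adjoints, hence is a non-scalar central element of
`𝒜_{q'}`. The centre of `𝒜_q`, on the other hand, is trivial. The shift `K` in `k` and the twisted
shift `W : e_{i,j,k} ↦ e^{-2πiθk} e_{i,j+1,k}` commute with `A`, `B`, `D` and their adjoints, so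
they commute with all of `𝒜_q`. A central `u ∈ 𝒜_q` therefore commutes with the diagonal operators
`A*A`, `DK*` and `BW*`, whose eigenvalues `1 - |q|^{2(i+1)}`, `e^{-2πiθj}` and `q^i e^{2πiθk}`
separate the basis vectors because `θ` is irrational. So `u` is diagonal, and commuting with the
shifts `A`, `B`, `D` makes its diagonal constant.
-/

open scoped InnerProductSpace
noncomputable section

open scoped ComplexConjugate
open Real

namespace StarSubalgebra

variable {R A : Type*} [CommSemiring R] [StarRing R] [Semiring A] [StarRing A] [Algebra R A]
  [StarModule R A]

theorem mem_centralizer_of_commute {s : Set A} {z : A}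
    (h : ∀ g ∈ s, Commute g z ∧ Commute g (star z)) : z ∈ centralizer R s :=
  (mem_centralizer_iff R).2 fun g hg =>
    ⟨(h g hg).1.eq, by simpa using ((h g hg).2.star_star).eq⟩

theorem topologicalClosure_adjoin_le_centralizer_of_subset [TopologicalSpace A]
    [IsTopologicalSemiring A] [ContinuousStar A] [T2Space A] {s t : Set A}
    (h : t ⊆ centralizer R s) : (StarAlgebra.adjoin R s).topologicalClosure ≤ centralizer R t :=
  (topologicalClosure_adjoin_le_centralizer_centralizer R s).trans (centralizer_le R _ _ h)

end StarSubalgebra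

namespace HilbertBasis

variable {ι 𝕜 E : Type*} [RCLike 𝕜] [NormedAddCommGroup E] [InnerProductSpace 𝕜 E]
  (b : HilbertBasis ι 𝕜 E)

theorem continuousLinearMap_ext {X Y : E →L[𝕜] E} (h : ∀ a, X (b a) = Y (b a)) : X = Y :=
  ContinuousLinearMap.ext_on (Submodule.dense_iff_topologicalClosure_eq_top.2 b.dense_span)
    (Set.forall_mem_range.2 h)

theorem inner_eq_ite [DecidableEq ι] (a a' : ι) : ⟪b a, b a'⟫_𝕜 = if a = a' then 1 else 0 :=
  orthonormal_iff_ite.1 b.orthonormal a a'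

theorem eq_inner_smul_of_inner_eq_zero {y : E} {a : ι} (h : ∀ a', a' ≠ a → ⟪b a', y⟫_𝕜 = 0) :
    y = ⟪b a, y⟫_𝕜 • b a := by
  refine (b.hasSum_repr y).unique ?_
  convert hasSum_single (f := fun a' => b.repr y a' • b a') a fun a' ha' => ?_ using 1
  · rw [b.repr_apply_apply]
  · rw [b.repr_apply_apply, h a' ha', zero_smul]

def IsWeightedShift (X : E →L[𝕜] E) (c : ι → 𝕜) (τ : ι → ι) : Prop :=
  ∀ a, X (b a) = c a • b (τ a)

variable {b}

theorem IsWeightedShift.mul {X Y : E →L[𝕜] E} {c d : ι → 𝕜} {τ ρ : ι → ι}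
    (hX : b.IsWeightedShift X c τ) (hY : b.IsWeightedShift Y d ρ) :
    b.IsWeightedShift (X * Y) (fun a => d a * c (ρ a)) (τ ∘ ρ) := fun a => by
  rw [mul_apply_eq_comp, hY, map_smul, hX, smul_smul]
  rfl

theorem IsWeightedShift.commute {X Y : E →L[𝕜] E} {c d : ι → 𝕜} {τ ρ : ι → ι}
    (hX : b.IsWeightedShift X c τ) (hY : b.IsWeightedShift Y d ρ)
    (hτρ : ∀ a, τ (ρ a) = ρ (τ a)) (hcd : ∀ a, d a * c (ρ a) = c a * d (τ a)) :
    Commute X Y :=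
  b.continuousLinearMap_ext fun a => by
    rw [(hX.mul hY) a, (hY.mul hX) a]
    simp only [Function.comp_apply, hτρ, hcd]

theorem IsWeightedShift.eq_of_commute_diagonal {X u : E →L[𝕜] E} {c d : ι → 𝕜} {τ : ι → ι}
    (hX : b.IsWeightedShift X c τ) (hu : b.IsWeightedShift u d id) (hcomm : Commute u X)
    {a : ι} (hc : c a ≠ 0) : d (τ a) = d a := by
  have h := congrArg (· (b a)) hcomm.eq
  simp only [(hu.mul hX) a, (hX.mul hu) a, Function.comp_apply, id] at h
  rw [mul_comm (d a)] at h
  exact mul_left_cancel₀ hc (smul_left_injective 𝕜 (b.orthonormal.ne_zero (τ a)) h)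

theorem IsWeightedShift.ne_smul_one {X : E →L[𝕜] E} {c : ι → 𝕜} {τ : ι → ι}
    (hX : b.IsWeightedShift X c τ) {a : ι} (hc : c a ≠ 0) (hτ : τ a ≠ a) (r : 𝕜) :
    X ≠ r • 1 := by
  classical
  intro h
  have h' := congrArg (fun Y : E →L[𝕜] E => ⟪b (τ a), Y (b a)⟫_𝕜) h
  simp [hX a, inner_smul_right, b.inner_eq_ite, hτ, hc] at h'
  exact b.orthonormal.ne_zero _ h'

variable [CompleteSpace E]

theorem IsWeightedShift.adjoint {X : E →L[𝕜] E} {c : ι → 𝕜} {σ : ι ≃ ι}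
    (hX : b.IsWeightedShift X c σ) :
    b.IsWeightedShift (star X) (fun a => conj (c (σ.symm a))) σ.symm := fun a => by
  classical
  have hcoeff (a' : ι) :
      ⟪b a', star X (b a)⟫_𝕜 = if σ a' = a then conj (c a') else 0 := by
    rw [ContinuousLinearMap.star_eq_adjoint, ContinuousLinearMap.adjoint_inner_right, hX,
      inner_smul_left, b.inner_eq_ite, mul_ite, mul_one, mul_zero]
  rw [b.eq_inner_smul_of_inner_eq_zero (y := star X (b a)) (a := σ.symm a) fun a' ha' => by
    rw [hcoeff, if_neg (by rintro rfl; simp at ha')], hcoeff]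
  simp

theorem IsWeightedShift.adjoint_mul_self {X : E →L[𝕜] E} {c : ι → 𝕜} {τ : ι → ι}
    (hX : b.IsWeightedShift X c τ) (hτ : τ.Injective) :
    b.IsWeightedShift (star X * X) (fun a => conj (c a) * c a) id := fun a => by
  classical
  have hcoeff (a' : ι) :
      ⟪b a', (star X * X) (b a)⟫_𝕜 = if a' = a then conj (c a) * c a else 0 := by
    rw [mul_apply_eq_comp, ContinuousLinearMap.star_eq_adjoint,
      ContinuousLinearMap.adjoint_inner_right, hX, hX, inner_smul_left, inner_smul_right,
      b.inner_eq_ite]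
    by_cases h : a' = a
    · simp [h]
    · simp [h, hτ.ne h]
  rw [b.eq_inner_smul_of_inner_eq_zero (y := (star X * X) (b a)) (a := a) fun a' ha' => by
    rw [hcoeff, if_neg ha'], hcoeff, if_pos rfl, id]

theorem IsWeightedShift.mul_adjoint {X Y : E →L[𝕜] E} {c d : ι → 𝕜} {σ : ι ≃ ι}
    (hX : b.IsWeightedShift X c σ) (hY : b.IsWeightedShift Y d σ) :
    b.IsWeightedShift (X * star Y) (fun a => conj (d (σ.symm a)) * c (σ.symm a)) id :=
  fun a => by
  rw [(hX.mul hY.adjoint) a]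
  simp

theorem IsWeightedShift.inner_eq_zero_of_commute {X u : E →L[𝕜] E} {c : ι → 𝕜}
    (hX : b.IsWeightedShift X c id) (hu : Commute u X) {a a' : ι} (hne : c a ≠ c a') :
    ⟪b a', u (b a)⟫_𝕜 = 0 := by
  have hstar : b.IsWeightedShift (star X) (fun a => conj (c a)) id :=
    have hX' : b.IsWeightedShift X c (Equiv.refl ι) := hX
    hX'.adjoint
  have key : c a * ⟪b a', u (b a)⟫_𝕜 = c a' * ⟪b a', u (b a)⟫_𝕜 :=
    calc c a * ⟪b a', u (b a)⟫_𝕜 = ⟪b a', u (X (b a))⟫_𝕜 := by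
          rw [hX, map_smul, inner_smul_right, id]
      _ = ⟪star X (b a'), u (b a)⟫_𝕜 := by
          rw [← mul_apply_eq_comp, hu.eq, mul_apply_eq_comp, ContinuousLinearMap.star_eq_adjoint,
            ContinuousLinearMap.adjoint_inner_left]
      _ = c a' * ⟪b a', u (b a)⟫_𝕜 := by rw [hstar, inner_smul_left, RCLike.conj_conj, id]
  exact (mul_eq_mul_right_iff.1 key).resolve_left hne

variable (b) in
theorem exists_isWeightedShift (σ : ι ≃ ι) {c : ι → 𝕜} (hc : ∀ a, ‖c a‖ = 1) :
    ∃ X : E →L[𝕜] E, b.IsWeightedShift X c σ := by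
  classical
  -- The vectors `c a • b (σ a)` form a second Hilbert basis, and `X` carries `b` onto it.
  set v : ι → E := fun a => c a • b (σ a)
  have hv : Orthonormal 𝕜 v := by
    rw [orthonormal_iff_ite]
    intro a a'
    simp only [v, inner_smul_left, inner_smul_right, b.inner_eq_ite, σ.injective.eq_iff]
    split_ifs with h
    · subst h
      rw [mul_one, RCLike.mul_conj, hc, RCLike.ofReal_one, one_pow]
    · simp
  have hsp : ⊤ ≤ (Submodule.span 𝕜 (Set.range v)).topologicalClosure := by
    rw [← b.dense_span]
    refine Submodule.topologicalClosure_mono (Submodule.span_le.2 ?_)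
    rintro _ ⟨a, rfl⟩
    have hca : c (σ.symm a) ≠ 0 := norm_ne_zero_iff.1 (by rw [hc]; exact one_ne_zero)
    have : b a = (c (σ.symm a))⁻¹ • v (σ.symm a) := by
      simp only [v, smul_smul, inv_mul_cancel₀ hca, one_smul, Equiv.apply_symm_apply]
    rw [this]
    exact Submodule.smul_mem _ _ (Submodule.subset_span ⟨_, rfl⟩)
  refine ⟨(b.repr.trans (HilbertBasis.mk hv hsp).repr.symm).toContinuousLinearEquiv, fun a => ?_⟩
  simp [b.repr_self, v]

end HilbertBasis

namespace UqH

def phase (θ : ℝ) (j : ℤ) : ℂ :=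
  Complex.exp (-(2 * (Real.pi : ℂ) * (θ : ℂ) * (j : ℂ)) * Complex.I)

theorem phase_eq_exp (θ : ℝ) (j : ℤ) :
    phase θ j = Complex.exp (↑(-(2 * π * θ * j)) * Complex.I) := by
  simp [phase]

theorem norm_phase (θ : ℝ) (j : ℤ) : ‖phase θ j‖ = 1 := by
  rw [phase_eq_exp, Complex.norm_exp_ofReal_mul_I]

theorem phase_ne_zero (θ : ℝ) (j : ℤ) : phase θ j ≠ 0 :=
  Complex.exp_ne_zero _

theorem phase_add (θ : ℝ) (j j' : ℤ) : phase θ (j + j') = phase θ j * phase θ j' := by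
  rw [phase, phase, phase, ← Complex.exp_add]
  push_cast
  ring_nf

theorem conj_phase (θ : ℝ) (j : ℤ) : conj (phase θ j) = phase θ (-j) := by
  rw [phase_eq_exp, phase_eq_exp, ← Complex.exp_conj, map_mul, Complex.conj_ofReal,
    Complex.conj_I]
  push_cast
  ring_nf

theorem phase_intCast (m j : ℤ) : phase m j = 1 := by
  rw [phase, show -(2 * (π : ℂ) * ((m : ℝ) : ℂ) * (j : ℂ)) * Complex.I
    = ((-(m * j) : ℤ) : ℂ) * (2 * π * Complex.I) by push_cast; ring]
  exact Complex.exp_int_mul_two_pi_mul_I _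

theorem phase_injective {θ : ℝ} (hθ : Irrational θ) : Function.Injective (phase θ) := by
  intro j j' h
  obtain ⟨n, hn⟩ := Complex.exp_eq_exp_iff_exists_int.1 h
  have hreal : ((j' - j : ℤ) : ℝ) * θ = n := by
    have him : -(2 * π * θ * j) = -(2 * π * θ * j') + n * (2 * π) := by
      simpa using congrArg Complex.im hn
    have h2π : 2 * π * ((j' - j) * θ - n) = 0 := by linear_combination him
    push_cast
    exact sub_eq_zero.1 ((mul_eq_zero.1 h2π).resolve_left (by positivity))
  by_contra hne
  exact (hθ.intCast_mul (sub_ne_zero.2 (Ne.symm hne))).ne_int n hreal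

theorem exists_arg_ofReal_div_pi_eq_intCast (x : ℝ) : ∃ m : ℤ, Complex.arg x / π = m := by
  rcases le_or_gt 0 x with hx | hx
  · exact ⟨0, by simp [Complex.arg_ofReal_of_nonneg hx]⟩
  · exact ⟨1, by simp [Complex.arg_ofReal_of_neg hx, pi_ne_zero]⟩

def sqrtWeight (r : ℝ) (i : ℕ) : ℂ := ((√(1 - r ^ (2 * (i + 1))) : ℝ) : ℂ)

theorem sqrtWeight_ne_zero {r : ℝ} (h0 : 0 ≤ r) (h1 : r < 1) (i : ℕ) : sqrtWeight r i ≠ 0 := by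
  have : r ^ (2 * (i + 1)) < 1 := pow_lt_one₀ h0 h1 (by omega)
  simpa [sqrtWeight, Real.sqrt_eq_zero', sub_nonpos] using this

theorem conj_sqrtWeight_mul_self_injective {r : ℝ} (h0 : 0 < r) (h1 : r < 1) :
    Function.Injective fun i => conj (sqrtWeight r i) * sqrtWeight r i := by
  intro i i' h
  have hpow : 1 - r ^ (2 * (i + 1)) = 1 - r ^ (2 * (i' + 1)) := by
    simp only [sqrtWeight, Complex.conj_ofReal, ← Complex.ofReal_mul] at h
    have hle (n : ℕ) : 0 ≤ 1 - r ^ (2 * (n + 1)) := sub_nonneg.2 (pow_le_one₀ h0.le h1.le)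
    rwa [Complex.ofReal_inj, Real.mul_self_sqrt (hle i), Real.mul_self_sqrt (hle i')] at h
  have := pow_right_injective₀ h0 h1.ne (sub_right_injective hpow)
  omega

def stdBasis : HilbertBasis (ℕ × ℤ × ℤ) ℂ UqH := default

theorem stdBasis_apply (i : ℕ) (j k : ℤ) : stdBasis (i, j, k) = e i j k :=
  (stdBasis.repr_symm_single (i, j, k)).symm

theorem isWeightedShift_of_e {X : UqH →L[ℂ] UqH} (c : ℕ × ℤ × ℤ → ℂ)
    (τ : ℕ × ℤ × ℤ → ℕ × ℤ × ℤ)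
    (h : ∀ i j k,
      X (e i j k) = c (i, j, k) • e (τ (i, j, k)).1 (τ (i, j, k)).2.1 (τ (i, j, k)).2.2) :
    stdBasis.IsWeightedShift X c τ := fun ⟨i, j, k⟩ => by
  rw [stdBasis_apply, h, ← stdBasis_apply]

def shiftI (a : ℕ × ℤ × ℤ) : ℕ × ℤ × ℤ := (a.1 + 1, a.2)

theorem shiftI_injective : shiftI.Injective := fun a a' h => by
  simpa [shiftI, Prod.ext_iff] using h

@[simps]
def shiftJ : ℕ × ℤ × ℤ ≃ ℕ × ℤ × ℤ where
  toFun a := (a.1, a.2.1 + 1, a.2.2)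
  invFun a := (a.1, a.2.1 - 1, a.2.2)
  left_inv a := by simp
  right_inv a := by simp

@[simps]
def shiftK : ℕ × ℤ × ℤ ≃ ℕ × ℤ × ℤ where
  toFun a := (a.1, a.2.1, a.2.2 + 1)
  invFun a := (a.1, a.2.1, a.2.2 - 1)
  left_inv a := by simp
  right_inv a := by simp

theorem mem_centralizer_of_shiftK {α β : ℕ → ℂ} {δ : ℤ → ℂ} {A B D K : UqH →L[ℂ] UqH}
    (hA : stdBasis.IsWeightedShift A (fun a => α a.1) shiftI)
    (hB : stdBasis.IsWeightedShift B (fun a => β a.1) shiftJ)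
    (hD : stdBasis.IsWeightedShift D (fun a => δ a.2.1) shiftK)
    (hK : stdBasis.IsWeightedShift K 1 shiftK) :
    K ∈ StarSubalgebra.centralizer ℂ {A, B, D} := by
  refine StarSubalgebra.mem_centralizer_of_commute ?_
  simp only [Set.mem_insert_iff, Set.mem_singleton_iff, forall_eq_or_imp, forall_eq]
  refine ⟨⟨hA.commute hK ?_ ?_, hA.commute hK.adjoint ?_ ?_⟩,
    ⟨hB.commute hK ?_ ?_, hB.commute hK.adjoint ?_ ?_⟩,
    ⟨hD.commute hK ?_ ?_, hD.commute hK.adjoint ?_ ?_⟩⟩ <;> intro a <;> simp [shiftI]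

theorem mem_centralizer_of_twistedShiftJ {α β : ℕ → ℂ} {θ : ℝ} {A B D W : UqH →L[ℂ] UqH}
    (hA : stdBasis.IsWeightedShift A (fun a => α a.1) shiftI)
    (hB : stdBasis.IsWeightedShift B (fun a => β a.1) shiftJ)
    (hD : stdBasis.IsWeightedShift D (fun a => phase θ a.2.1) shiftK)
    (hW : stdBasis.IsWeightedShift W (fun a => phase θ a.2.2) shiftJ) :
    W ∈ StarSubalgebra.centralizer ℂ {A, B, D} := by
  refine StarSubalgebra.mem_centralizer_of_commute ?_
  simp only [Set.mem_insert_iff, Set.mem_singleton_iff, forall_eq_or_imp, forall_eq]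
  refine ⟨⟨hA.commute hW ?_ ?_, hA.commute hW.adjoint ?_ ?_⟩,
    ⟨hB.commute hW ?_ ?_, hB.commute hW.adjoint ?_ ?_⟩,
    ⟨hD.commute hW ?_ ?_, hD.commute hW.adjoint ?_ ?_⟩⟩ <;> intro a <;>
    simp only [shiftI, shiftJ_apply, shiftJ_symm_apply, shiftK_apply, sub_eq_add_neg,
      add_neg_cancel_right, neg_add_cancel_right, conj_phase, phase_add, map_mul] <;> ring

theorem isWeightedShift_id_of_commute {q : ℂ} (hq0 : 0 < ‖q‖) (hq1 : ‖q‖ < 1) {θ : ℝ}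
    (hθ : Irrational θ) {A B D K W u : UqH →L[ℂ] UqH}
    (hA : stdBasis.IsWeightedShift A (fun a => sqrtWeight ‖q‖ a.1) shiftI)
    (hB : stdBasis.IsWeightedShift B (fun a => q ^ a.1) shiftJ)
    (hD : stdBasis.IsWeightedShift D (fun a => phase θ a.2.1) shiftK)
    (hK : stdBasis.IsWeightedShift K 1 shiftK)
    (hW : stdBasis.IsWeightedShift W (fun a => phase θ a.2.2) shiftJ)
    (huA : Commute u (star A * A)) (huD : Commute u (D * star K))
    (huB : Commute u (B * star W)) :
    stdBasis.IsWeightedShift u (fun a => ⟪stdBasis a, u (stdBasis a)⟫_ℂ) id := by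
  intro a
  refine stdBasis.eq_inner_smul_of_inner_eq_zero fun a' hne => ?_
  obtain ⟨i, j, k⟩ := a
  obtain ⟨i', j', k'⟩ := a'
  by_cases hi : i = i'
  · subst hi
    by_cases hj : j = j'
    · subst hj
      have hk : k ≠ k' := by rintro rfl; exact hne rfl
      refine (hB.mul_adjoint hW).inner_eq_zero_of_commute huB ?_
      simpa [conj_phase, norm_pos_iff.1 hq0] using (phase_injective hθ).ne (neg_injective.ne hk)
    · refine (hD.mul_adjoint hK).inner_eq_zero_of_commute huD ?_
      simpa using (phase_injective hθ).ne hj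
  · exact (hA.adjoint_mul_self shiftI_injective).inner_eq_zero_of_commute huA
      ((conj_sqrtWeight_mul_self_injective hq0 hq1).ne hi)

theorem eq_smul_one_of_commute {α β : ℕ → ℂ} (hα : ∀ i, α i ≠ 0) (hβ : ∀ i, β i ≠ 0) {θ : ℝ}
    {A B D u : UqH →L[ℂ] UqH} {d : ℕ × ℤ × ℤ → ℂ}
    (hA : stdBasis.IsWeightedShift A (fun a => α a.1) shiftI)
    (hB : stdBasis.IsWeightedShift B (fun a => β a.1) shiftJ)
    (hD : stdBasis.IsWeightedShift D (fun a => phase θ a.2.1) shiftK)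
    (hu : stdBasis.IsWeightedShift u d id)
    (huA : Commute u A) (huB : Commute u B) (huD : Commute u D) :
    u = d (0, 0, 0) • 1 := by
  have hdI : Function.Periodic (fun i : ℕ => d (i, 0, 0)) 1 := fun i =>
    hA.eq_of_commute_diagonal (a := (i, 0, 0)) hu huA (hα i)
  have hdJ (i : ℕ) : Function.Periodic (fun j : ℤ => d (i, j, 0)) 1 := fun j =>
    hB.eq_of_commute_diagonal (a := (i, j, 0)) hu huB (hβ i)
  have hdK (i : ℕ) (j : ℤ) : Function.Periodic (fun k : ℤ => d (i, j, k)) 1 := fun k =>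
    hD.eq_of_commute_diagonal (a := (i, j, k)) hu huD (phase_ne_zero θ j)
  have hconst (i : ℕ) (j k : ℤ) : d (i, j, k) = d (0, 0, 0) := by
    have hk := (hdK i j).int_mul_eq k
    have hj := (hdJ i).int_mul_eq j
    have hi := hdI.nat_mul_eq i
    simp only [mul_one, Int.cast_id, Nat.cast_id] at hk hj hi
    rw [hk, hj, hi]
  refine stdBasis.continuousLinearMap_ext fun ⟨i, j, k⟩ => ?_
  rw [hu, hconst]
  simp

theorem isCentral_of_isWeightedShift {q : ℂ} (hq0 : 0 < ‖q‖) (hq1 : ‖q‖ < 1) {θ : ℝ}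
    (hθ : Irrational θ) {A B D : UqH →L[ℂ] UqH}
    (hA : stdBasis.IsWeightedShift A (fun a => sqrtWeight ‖q‖ a.1) shiftI)
    (hB : stdBasis.IsWeightedShift B (fun a => q ^ a.1) shiftJ)
    (hD : stdBasis.IsWeightedShift D (fun a => phase θ a.2.1) shiftK) :
    Algebra.IsCentral ℂ
      (StarAlgebra.adjoin ℂ ({A, B, D} : Set (UqH →L[ℂ] UqH))).topologicalClosure := by
  set 𝒜 := (StarAlgebra.adjoin ℂ ({A, B, D} : Set (UqH →L[ℂ] UqH))).topologicalClosure
  have hgen : ∀ x ∈ ({A, B, D} : Set (UqH →L[ℂ] UqH)), x ∈ 𝒜 := fun x hx =>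
    StarSubalgebra.le_topologicalClosure _ (StarAlgebra.subset_adjoin ℂ _ hx)
  obtain ⟨K, hK⟩ := stdBasis.exists_isWeightedShift shiftK (c := 1) fun _ => norm_one
  obtain ⟨W, hW⟩ := stdBasis.exists_isWeightedShift shiftJ fun a => norm_phase θ a.2.2
  have h𝒜 : 𝒜 ≤ StarSubalgebra.centralizer ℂ {K, W} :=
    StarSubalgebra.topologicalClosure_adjoin_le_centralizer_of_subset <| Set.pair_subset
      (mem_centralizer_of_shiftK hA hB hD hK) (mem_centralizer_of_twistedShiftJ hA hB hD hW)
  refine ⟨fun z hz => ?_⟩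
  have hcomm (x : UqH →L[ℂ] UqH) (hx : x ∈ 𝒜) : Commute (z : UqH →L[ℂ] UqH) x :=
    congrArg Subtype.val (Subalgebra.mem_center_iff.1 hz ⟨x, hx⟩) |>.symm
  have hKW := (StarSubalgebra.mem_centralizer_iff ℂ).1 (h𝒜 z.2)
  have hA𝒜 := hgen A (by simp)
  have hB𝒜 := hgen B (by simp)
  have hD𝒜 := hgen D (by simp)
  have hdiag := isWeightedShift_id_of_commute hq0 hq1 hθ hA hB hD hK hW
    (hcomm _ (mul_mem (star_mem hA𝒜) hA𝒜))
    ((hcomm D hD𝒜).mul_right (hKW K (by simp)).2.symm)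
    ((hcomm B hB𝒜).mul_right (hKW W (by simp)).2.symm)
  obtain ⟨c, hz⟩ : ∃ c : ℂ, (z : UqH →L[ℂ] UqH) = c • 1 :=
    ⟨_, eq_smul_one_of_commute (sqrtWeight_ne_zero (norm_nonneg q) hq1)
      (fun i => pow_ne_zero i (norm_pos_iff.1 hq0)) hA hB hD hdiag (hcomm A hA𝒜)
      (hcomm B hB𝒜) (hcomm D hD𝒜)⟩
  refine Algebra.mem_bot.2 ⟨c, Subtype.ext ?_⟩
  rw [hz, ← Algebra.algebraMap_eq_smul_one]
  rfl

theorem not_isCentral_of_isWeightedShift {α β : ℕ → ℂ} {A B D : UqH →L[ℂ] UqH}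
    (hA : stdBasis.IsWeightedShift A (fun a => α a.1) shiftI)
    (hB : stdBasis.IsWeightedShift B (fun a => β a.1) shiftJ)
    (hD : stdBasis.IsWeightedShift D 1 shiftK) :
    ¬ Algebra.IsCentral ℂ
      (StarAlgebra.adjoin ℂ ({A, B, D} : Set (UqH →L[ℂ] UqH))).topologicalClosure := by
  set 𝒜 := (StarAlgebra.adjoin ℂ ({A, B, D} : Set (UqH →L[ℂ] UqH))).topologicalClosure
  have hD𝒜 : D ∈ 𝒜 :=
    StarSubalgebra.le_topologicalClosure _ (StarAlgebra.subset_adjoin ℂ _ (by simp))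
  have h𝒜 : 𝒜 ≤ StarSubalgebra.centralizer ℂ {D} :=
    StarSubalgebra.topologicalClosure_adjoin_le_centralizer_of_subset <|
      Set.singleton_subset_iff.2 (mem_centralizer_of_shiftK (δ := 1) hA hB hD hD)
  have hcentral : (⟨D, hD𝒜⟩ : 𝒜) ∈ Subalgebra.center ℂ 𝒜 :=
    Subalgebra.mem_center_iff.2 fun x =>
      Subtype.ext ((StarSubalgebra.mem_centralizer_iff ℂ).1 (h𝒜 x.2) D rfl).1.symm
  rintro ⟨hbot⟩
  obtain ⟨c, hc⟩ := Algebra.mem_bot.1 (hbot hcentral)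
  refine hD.ne_smul_one (a := (0, 0, 0)) one_ne_zero (by simp) c ?_
  simpa [Algebra.algebraMap_eq_smul_one] using (congrArg Subtype.val hc).symm

end UqH

open UqH

theorem Cstar_algebras_nonisomorphic_general
    (q : ℂ) (hq0 : 0 < ‖q‖) (hq1 : ‖q‖ < 1)
    (θ : ℝ) (hirr : Irrational θ)
    (q' : ℝ)
    (θ' : ℝ) (hθ' : θ' = Complex.arg (q' : ℂ) / Real.pi)
    (A B D : UqH →L[ℂ] UqH)
    (hA : ∀ (i : ℕ) (j k : ℤ),
      A (e i j k) = ((Real.sqrt (1 - ‖q‖ ^ (2 * (i + 1))) : ℝ) : ℂ) • e (i + 1) j k)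
    (hB : ∀ (i : ℕ) (j k : ℤ), B (e i j k) = (q ^ i) • e i (j + 1) k)
    (hD : ∀ (i : ℕ) (j k : ℤ),
      D (e i j k) = Complex.exp (-(2 * (Real.pi : ℂ) * (θ : ℂ) * (j : ℂ)) * Complex.I) • e i j (k + 1))
    (A' B' D' : UqH →L[ℂ] UqH)
    (hA' : ∀ (i : ℕ) (j k : ℤ),
      A' (e i j k) = ((Real.sqrt (1 - |q'| ^ (2 * (i + 1))) : ℝ) : ℂ) • e (i + 1) j k)
    (hB' : ∀ (i : ℕ) (j k : ℤ), B' (e i j k) = ((q' : ℂ) ^ i) • e i (j + 1) k)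
    (hD' : ∀ (i : ℕ) (j k : ℤ),
      D' (e i j k) = Complex.exp (-(2 * (Real.pi : ℂ) * (θ' : ℂ) * (j : ℂ)) * Complex.I) • e i j (k + 1))
    (𝒜q 𝒜q' : StarSubalgebra ℂ (UqH →L[ℂ] UqH))
    (h𝒜q : 𝒜q = (StarAlgebra.adjoin ℂ ({A, B, D} : Set (UqH →L[ℂ] UqH))).topologicalClosure)
    (h𝒜q' : 𝒜q' = (StarAlgebra.adjoin ℂ ({A', B', D'} : Set (UqH →L[ℂ] UqH))).topologicalClosure) :
    IsEmpty (𝒜q ≃⋆ₐ[ℂ] 𝒜q') := by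
  subst h𝒜q h𝒜q'
  have hcentral := isCentral_of_isWeightedShift hq0 hq1 hirr
    (isWeightedShift_of_e _ shiftI hA) (isWeightedShift_of_e _ shiftJ hB)
    (isWeightedShift_of_e _ shiftK hD)
  obtain ⟨m, hm⟩ := exists_arg_ofReal_div_pi_eq_intCast q'
  have hD'shift : stdBasis.IsWeightedShift D' 1 shiftK := isWeightedShift_of_e _ shiftK
    fun i j k => (hD' i j k).trans <|
      congrArg (· • e i j (k + 1)) (by rw [hθ', hm]; exact phase_intCast m j)
  exact ⟨fun Φ => not_isCentral_of_isWeightedShift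
    (isWeightedShift_of_e (fun a => sqrtWeight |q'| a.1) shiftI hA')
    (isWeightedShift_of_e _ shiftJ hB') hD'shift (.of_algEquiv ℂ _ _ Φ.toAlgEquiv)⟩

/-- for `q` non-real with `θ = arg(q)/π` irrational and `q'` real,
the C*-algebras `𝒜_q = C(U_q(2))` and `𝒜_{q'} = C(U_{q'}(2))` are non-isomorphic:
there is no star-algebra isomorphism over `ℂ` between them. -/
theorem Cstar_algebras_nonisomorphic
    (q : ℂ) (hq0 : 0 < ‖q‖) (hq1 : ‖q‖ < 1) (hqnr : q.im ≠ 0)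
    (θ : ℝ) (hθ : θ = Complex.arg q / Real.pi) (hirr : Irrational θ)
    (q' : ℝ) (hq'0 : 0 < |q'|) (hq'1 : |q'| < 1)
    (θ' : ℝ) (hθ' : θ' = Complex.arg (q' : ℂ) / Real.pi)
    (A B D : UqH →L[ℂ] UqH)
    (hA : ∀ (i : ℕ) (j k : ℤ),
      A (e i j k) = ((Real.sqrt (1 - ‖q‖ ^ (2 * (i + 1))) : ℝ) : ℂ) • e (i + 1) j k)
    (hB : ∀ (i : ℕ) (j k : ℤ), B (e i j k) = (q ^ i) • e i (j + 1) k)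
    (hD : ∀ (i : ℕ) (j k : ℤ),
      D (e i j k) = Complex.exp (-(2 * (Real.pi : ℂ) * (θ : ℂ) * (j : ℂ)) * Complex.I) • e i j (k + 1))
    (A' B' D' : UqH →L[ℂ] UqH)
    (hA' : ∀ (i : ℕ) (j k : ℤ),
      A' (e i j k) = ((Real.sqrt (1 - |q'| ^ (2 * (i + 1))) : ℝ) : ℂ) • e (i + 1) j k)
    (hB' : ∀ (i : ℕ) (j k : ℤ), B' (e i j k) = ((q' : ℂ) ^ i) • e i (j + 1) k)
    (hD' : ∀ (i : ℕ) (j k : ℤ),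
      D' (e i j k) = Complex.exp (-(2 * (Real.pi : ℂ) * (θ' : ℂ) * (j : ℂ)) * Complex.I) • e i j (k + 1))
    (𝒜q 𝒜q' : StarSubalgebra ℂ (UqH →L[ℂ] UqH))
    (h𝒜q : 𝒜q = (StarAlgebra.adjoin ℂ ({A, B, D} : Set (UqH →L[ℂ] UqH))).topologicalClosure)
    (h𝒜q' : 𝒜q' = (StarAlgebra.adjoin ℂ ({A', B', D'} : Set (UqH →L[ℂ] UqH))).topologicalClosure) :
    IsEmpty (𝒜q ≃⋆ₐ[ℂ] 𝒜q') :=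
  Cstar_algebras_nonisomorphic_general q hq0 hq1 θ hirr q' θ' hθ' A B D hA hB hD A' B' D' hA' hB'
    hD' 𝒜q 𝒜q' h𝒜q h𝒜q'
end
end

section
/- Suppose θ = (1/π)·arg(q) is irrational (in particular q is not real). Let 𝒪 be the (not necessarily closed) star-subalgebra of B(H) generated by A, B, D and the identity. Then the center of 𝒪 is trivial: every element of 𝒪 commuting with all elements of 𝒪 is a scalar multiple of the identity. -/
/-!
Work with the matrix entries `⟪e_{p'}, T e_p⟫` of operators in the standard basis. The generators,
hence all of `𝒪`, are covariant under the twisted shifts `e_{i,j,k} ↦ φ(m k) e_{i,j+m,k+n}`, where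
`φ(n) = exp(-2πiθn)`. Let `T` be central. Commuting with `B*B`, which is diagonal with the pairwise
distinct eigenvalues `|q|^{2i}`, kills the entries with `i' ≠ i`. Commuting with `D` together with
covariance in `k` forces `φ(j) = φ(j')` at a nonzero entry, and commuting with `B` together with
covariance in `j` forces `φ(k' - k) = 1`; as `θ` is irrational, `φ` is injective, so `T` is
diagonal. Covariance makes the diagonal independent of `j` and `k`, and commuting with `A`, whose
weights `√(1 - |q|^{2(i+1)})` do not vanish, makes it independent of `i`.
-/

open scoped InnerProductSpace
noncomputable section

namespace HilbertBasis

variable {ι 𝕜 E : Type*} [RCLike 𝕜] [NormedAddCommGroup E] [InnerProductSpace 𝕜 E]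
  (b : HilbertBasis ι 𝕜 E)

def matrixEntry (T : E →L[𝕜] E) (i j : ι) : 𝕜 := ⟪b i, T (b j)⟫_𝕜

theorem matrixEntry_add (S T : E →L[𝕜] E) (i j : ι) :
    b.matrixEntry (S + T) i j = b.matrixEntry S i j + b.matrixEntry T i j :=
  inner_add_right _ _ _

theorem matrixEntry_of_apply_eq_smul [DecidableEq ι] {T : E →L[𝕜] E} {j k : ι} {c : 𝕜}
    (h : T (b j) = c • b k) (i : ι) : b.matrixEntry T i j = if i = k then c else 0 := by
  rw [matrixEntry, h, inner_smul_right, orthonormal_iff_ite.mp b.orthonormal]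
  split_ifs <;> simp

theorem eq_smul_one_of_matrixEntry {T : E →L[𝕜] E} {c : 𝕜}
    (hoff : ∀ i j, i ≠ j → b.matrixEntry T i j = 0) (hdiag : ∀ i, b.matrixEntry T i i = c) :
    T = c • 1 := by
  classical
  refine ContinuousLinearMap.ext_on
    (Submodule.dense_iff_topologicalClosure_eq_top.mpr b.dense_span) ?_
  rintro _ ⟨j, rfl⟩
  apply b.repr.injective
  ext i
  rw [b.repr_apply_apply, b.repr_apply_apply, smul_apply, one_apply_eq_self, inner_smul_right,
    orthonormal_iff_ite.mp b.orthonormal]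
  by_cases hij : i = j
  · subst hij
    rw [if_pos rfl, mul_one]
    exact hdiag i
  · rw [if_neg hij, mul_zero]
    exact hoff i j hij

variable [CompleteSpace E]

theorem matrixEntry_star (T : E →L[𝕜] E) (i j : ι) :
    b.matrixEntry (star T) i j = (starRingEnd 𝕜) (b.matrixEntry T j i) := by
  rw [matrixEntry, matrixEntry, ContinuousLinearMap.star_eq_adjoint,
    ContinuousLinearMap.adjoint_inner_right, inner_conj_symm]

theorem matrixEntry_mul (S T : E →L[𝕜] E) (i j : ι) :
    b.matrixEntry (S * T) i j = ∑' k, b.matrixEntry S i k * b.matrixEntry T k j := by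
  rw [matrixEntry, mul_apply_eq_comp, ← ContinuousLinearMap.adjoint_inner_left,
    ← b.tsum_inner_mul_inner]
  simp only [ContinuousLinearMap.adjoint_inner_left, matrixEntry]

theorem matrixEntry_mul_comm_of_apply_eq_smul {T S : E →L[𝕜] E} (hTS : Commute T S)
    {i j i' j' : ι} {c c' : 𝕜} (hS : S (b j) = c • b j') (hS' : star S (b i) = c' • b i') :
    c * b.matrixEntry T i j' = (starRingEnd 𝕜) c' * b.matrixEntry T i' j := by
  have hTS' : ⟪b i, T (S (b j))⟫_𝕜 = ⟪b i, S (T (b j))⟫_𝕜 := by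
    rw [← mul_apply_eq_comp, hTS.eq, mul_apply_eq_comp]
  rwa [hS, map_smul, inner_smul_right, ← ContinuousLinearMap.adjoint_inner_left S,
    ← ContinuousLinearMap.star_eq_adjoint, hS', inner_smul_left] at hTS'

end HilbertBasis

def stdBasis : HilbertBasis (ℕ × ℤ × ℤ) ℂ UqH :=
  HilbertBasis.ofRepr (LinearIsometryEquiv.refl ℂ UqH)

theorem stdBasis_apply (i : ℕ) (j k : ℤ) : stdBasis (i, j, k) = e i j k :=
  (stdBasis.repr_symm_single (i, j, k)).symm

local notation "𝕄" => stdBasis.matrixEntry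

def phase (θ : ℝ) (n : ℤ) : ℂ :=
  Complex.exp (-(2 * (Real.pi : ℂ) * (θ : ℂ) * (n : ℂ)) * Complex.I)

theorem phase_add (θ : ℝ) (m n : ℤ) : phase θ (m + n) = phase θ m * phase θ n := by
  rw [phase, phase, phase, ← Complex.exp_add]
  push_cast
  ring_nf

theorem phase_zero (θ : ℝ) : phase θ 0 = 1 := by simp [phase]

theorem phase_neg (θ : ℝ) (n : ℤ) :
    phase θ (-n) = Complex.exp ((2 * (Real.pi : ℂ) * (θ : ℂ) * (n : ℂ)) * Complex.I) := by
  rw [phase]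
  push_cast
  ring_nf

theorem conj_phase (θ : ℝ) (n : ℤ) : (starRingEnd ℂ) (phase θ n) = phase θ (-n) := by
  rw [phase, phase, ← Complex.exp_conj]
  simp only [map_mul, map_neg, Complex.conj_I, Complex.conj_ofReal, map_ofNat, map_intCast]
  push_cast
  ring_nf

theorem phase_injective {θ : ℝ} (hθ : Irrational θ) : Function.Injective (phase θ) := by
  intro m n h
  obtain ⟨l, hl⟩ := Complex.exp_eq_exp_iff_exists_int.mp h
  by_contra hmn
  have hl' : ((θ * ((n - m : ℤ) : ℝ) : ℝ) : ℂ) * (2 * Real.pi * Complex.I)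
      = ((l : ℝ) : ℂ) * (2 * Real.pi * Complex.I) := by
    push_cast
    linear_combination hl
  have hne : (2 * Real.pi * Complex.I : ℂ) ≠ 0 := by simp [Real.pi_ne_zero]
  exact (hθ.mul_intCast (sub_ne_zero.mpr (Ne.symm hmn))).ne_int l
    (by exact_mod_cast mul_right_cancel₀ hne hl')

/-- The entrywise form of commuting with the unitaries `e_{i,j,k} ↦ φ(m k) e_{i,j+m,k+n}`,
`φ = phase θ`. -/
def IsTwistedShiftCovariant (θ : ℝ) (T : UqH →L[ℂ] UqH) : Prop :=
  ∀ (i' i : ℕ) (j' k' j k m n : ℤ),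
    𝕄 T (i', j' + m, k' + n) (i, j + m, k + n) =
      phase θ (m * (k' - k)) * 𝕄 T (i', j', k') (i, j, k)

namespace IsTwistedShiftCovariant

variable {θ : ℝ} {S T : UqH →L[ℂ] UqH}

theorem of_apply_eq_smul (f : ℕ → ℕ) (g : ℕ → ℂ) (a c : ℤ)
    (hT : ∀ i j k, T (e i j k) = (g i * phase θ (c * j)) • e (f i) (j + a) (k + c)) :
    IsTwistedShiftCovariant θ T := by
  intro i' i j' k' j k m n
  simp only [← stdBasis_apply] at hT
  rw [stdBasis.matrixEntry_of_apply_eq_smul (hT i (j + m) (k + n)),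
    stdBasis.matrixEntry_of_apply_eq_smul (hT i j k)]
  have hshift : (i', j' + m, k' + n) = (f i, j + m + a, k + n + c) ↔
      (i', j', k') = (f i, j + a, k + c) := by
    simp only [Prod.mk.injEq]
    omega
  by_cases h : (i', j', k') = (f i, j + a, k + c)
  · rw [if_pos (hshift.mpr h), if_pos h]
    obtain ⟨rfl, rfl, rfl⟩ := Prod.mk.injEq .. ▸ h
    rw [show c * (j + m) = m * (k + c - k) + c * j by ring, phase_add]
    ring
  · rw [if_neg (mt hshift.mp h), if_neg h, mul_zero]

theorem add (hS : IsTwistedShiftCovariant θ S) (hT : IsTwistedShiftCovariant θ T) :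
    IsTwistedShiftCovariant θ (S + T) := by
  intro i' i j' k' j k m n
  simp only [stdBasis.matrixEntry_add, hS i' i j' k' j k m n, hT i' i j' k' j k m n]
  ring

theorem mul (hS : IsTwistedShiftCovariant θ S) (hT : IsTwistedShiftCovariant θ T) :
    IsTwistedShiftCovariant θ (S * T) := by
  intro i' i j' k' j k m n
  rw [stdBasis.matrixEntry_mul, stdBasis.matrixEntry_mul, ← tsum_mul_left,
    ← ((Equiv.refl ℕ).prodCongr ((Equiv.addRight m).prodCongr (Equiv.addRight n))).tsum_eq]
  refine tsum_congr fun ⟨i'', j'', k''⟩ => ?_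
  simp only [Equiv.prodCongr_apply, Equiv.coe_refl, Prod.map, id, Equiv.coe_addRight]
  rw [hS, hT, show m * (k' - k) = m * (k' - k'') + m * (k'' - k) by ring, phase_add]
  ring

theorem star (hT : IsTwistedShiftCovariant θ T) : IsTwistedShiftCovariant θ (star T) := by
  intro i' i j' k' j k m n
  rw [stdBasis.matrixEntry_star, stdBasis.matrixEntry_star, hT, map_mul, conj_phase]
  ring_nf

end IsTwistedShiftCovariant

def twistedShiftCovariant (θ : ℝ) : StarSubalgebra ℂ (UqH →L[ℂ] UqH) where
  carrier := {T | IsTwistedShiftCovariant θ T}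
  add_mem' := .add
  mul_mem' := .mul
  star_mem' := .star
  algebraMap_mem' r := .of_apply_eq_smul id (fun _ => r) 0 0 fun i j k => by
    simp [phase_zero, Algebra.algebraMap_eq_smul_one]

section Center

variable {q : ℂ} {θ : ℝ} {T : UqH →L[ℂ] UqH}

theorem matrixEntry_eq_zero_of_fst_ne (hq0 : 0 < ‖q‖) (hq1 : ‖q‖ < 1) {B : UqH →L[ℂ] UqH}
    (hB : ∀ (i : ℕ) (j k : ℤ), B (e i j k) = (q ^ i) • e i (j + 1) k)
    (hBs : ∀ (i : ℕ) (j k : ℤ), (star B) (e i j k) = ((starRingEnd ℂ) q ^ i) • e i (j - 1) k)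
    (hT : Commute T (star B * B)) {i' i : ℕ} (h : i' ≠ i) (j' k' j k : ℤ) :
    𝕄 T (i', j', k') (i, j, k) = 0 := by
  have hBB : ∀ (i : ℕ) (j k : ℤ),
      (star B * B) (stdBasis (i, j, k)) = (((‖q‖ ^ 2) ^ i : ℝ) : ℂ) • stdBasis (i, j, k) := by
    intro i j k
    rw [stdBasis_apply, mul_apply_eq_comp, hB, map_smul, hBs, smul_smul, add_sub_cancel_right,
      ← mul_pow, Complex.mul_conj']
    push_cast
    rfl
  have hrel := stdBasis.matrixEntry_mul_comm_of_apply_eq_smul hT (hBB i j k)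
    (by rw [star_mul, star_star]; exact hBB i' j' k')
  rw [Complex.conj_ofReal] at hrel
  have hpow : (‖q‖ ^ 2) ^ i ≠ (‖q‖ ^ 2) ^ i' := fun hpow => h <|
    (pow_right_injective₀ (by positivity) (by nlinarith) hpow).symm
  by_contra hE
  exact hpow (by exact_mod_cast mul_right_cancel₀ hE hrel)

theorem matrixEntry_eq_zero_of_snd_fst_ne (hθ : Irrational θ) {D : UqH →L[ℂ] UqH}
    (hD : ∀ (i : ℕ) (j k : ℤ), D (e i j k) = phase θ j • e i j (k + 1))
    (hDs : ∀ (i : ℕ) (j k : ℤ), (star D) (e i j k) = phase θ (-j) • e i j (k - 1))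
    (hT : Commute T D) (hcov : IsTwistedShiftCovariant θ T) (i' i : ℕ) {j' j : ℤ} (h : j' ≠ j)
    (k' k : ℤ) : 𝕄 T (i', j', k') (i, j, k) = 0 := by
  simp only [← stdBasis_apply] at hD hDs
  have hrel := stdBasis.matrixEntry_mul_comm_of_apply_eq_smul hT (hD i j k) (hDs i' j' (k' + 1))
  have hshift := hcov i' i j' k' j k 0 1
  simp only [add_zero, add_sub_cancel_right, zero_mul, phase_zero, one_mul] at hrel hshift
  rw [hshift, conj_phase, neg_neg] at hrel
  by_contra hE
  exact h (phase_injective hθ (mul_right_cancel₀ hE hrel)).symm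

theorem matrixEntry_eq_zero_of_snd_snd_ne (hq0 : 0 < ‖q‖) (hθ : Irrational θ) {B : UqH →L[ℂ] UqH}
    (hB : ∀ (i : ℕ) (j k : ℤ), B (e i j k) = (q ^ i) • e i (j + 1) k)
    (hBs : ∀ (i : ℕ) (j k : ℤ), (star B) (e i j k) = ((starRingEnd ℂ) q ^ i) • e i (j - 1) k)
    (hT : Commute T B) (hcov : IsTwistedShiftCovariant θ T) (i : ℕ) (j' j : ℤ) {k' k : ℤ}
    (h : k' ≠ k) : 𝕄 T (i, j', k') (i, j, k) = 0 := by
  simp only [← stdBasis_apply] at hB hBs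
  have hrel := stdBasis.matrixEntry_mul_comm_of_apply_eq_smul hT (hB i j k) (hBs i (j' + 1) k')
  have hshift := hcov i i j' k' j k 1 0
  simp only [add_zero, add_sub_cancel_right, one_mul, map_pow, Complex.conj_conj] at hrel hshift
  rw [hshift] at hrel
  have hq : q ^ i ≠ 0 := pow_ne_zero _ (norm_pos_iff.mp hq0)
  by_contra hE
  have hph : phase θ (k' - k) = phase θ 0 := by
    rw [phase_zero]
    refine mul_right_cancel₀ (mul_ne_zero hq hE) ?_
    linear_combination hrel
  exact h (sub_eq_zero.mp (phase_injective hθ hph))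

theorem matrixEntry_diag_succ (hq1 : ‖q‖ < 1) {A : UqH →L[ℂ] UqH}
    (hA : ∀ (i : ℕ) (j k : ℤ),
      A (e i j k) = ((Real.sqrt (1 - ‖q‖ ^ (2 * (i + 1))) : ℝ) : ℂ) • e (i + 1) j k)
    (hAs : ∀ (i : ℕ) (j k : ℤ),
      (star A) (e i j k) = ((Real.sqrt (1 - ‖q‖ ^ (2 * i)) : ℝ) : ℂ) • e (i - 1) j k)
    (hT : Commute T A) (i : ℕ) (j k : ℤ) :
    𝕄 T (i + 1, j, k) (i + 1, j, k) = 𝕄 T (i, j, k) (i, j, k) := by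
  simp only [← stdBasis_apply] at hA hAs
  have hrel := stdBasis.matrixEntry_mul_comm_of_apply_eq_smul hT (hA i j k) (hAs (i + 1) j k)
  rw [Complex.conj_ofReal, Nat.add_sub_cancel] at hrel
  refine mul_left_cancel₀ ?_ hrel
  have hpow : ‖q‖ ^ (2 * (i + 1)) < 1 := pow_lt_one₀ (norm_nonneg q) hq1 (by omega)
  exact Complex.ofReal_ne_zero.mpr (Real.sqrt_ne_zero'.mpr (by linarith))

theorem eq_smul_one_of_commute_generators (hq0 : 0 < ‖q‖) (hq1 : ‖q‖ < 1) (hθ : Irrational θ)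
    {A B D : UqH →L[ℂ] UqH}
    (hA : ∀ (i : ℕ) (j k : ℤ),
      A (e i j k) = ((Real.sqrt (1 - ‖q‖ ^ (2 * (i + 1))) : ℝ) : ℂ) • e (i + 1) j k)
    (hAs : ∀ (i : ℕ) (j k : ℤ),
      (star A) (e i j k) = ((Real.sqrt (1 - ‖q‖ ^ (2 * i)) : ℝ) : ℂ) • e (i - 1) j k)
    (hB : ∀ (i : ℕ) (j k : ℤ), B (e i j k) = (q ^ i) • e i (j + 1) k)
    (hBs : ∀ (i : ℕ) (j k : ℤ), (star B) (e i j k) = ((starRingEnd ℂ) q ^ i) • e i (j - 1) k)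
    (hD : ∀ (i : ℕ) (j k : ℤ), D (e i j k) = phase θ j • e i j (k + 1))
    (hDs : ∀ (i : ℕ) (j k : ℤ), (star D) (e i j k) = phase θ (-j) • e i j (k - 1))
    (hcov : IsTwistedShiftCovariant θ T) (hTA : Commute T A) (hTB : Commute T B)
    (hTBB : Commute T (star B * B)) (hTD : Commute T D) :
    T = 𝕄 T (0, 0, 0) (0, 0, 0) • 1 := by
  refine stdBasis.eq_smul_one_of_matrixEntry ?_ ?_
  · rintro ⟨i', j', k'⟩ ⟨i, j, k⟩ hne
    rcases eq_or_ne i' i with rfl | hi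
    · rcases eq_or_ne j' j with rfl | hj
      · exact matrixEntry_eq_zero_of_snd_snd_ne hq0 hθ hB hBs hTB hcov i' j' j'
          fun hk => hne (by rw [hk])
      · exact matrixEntry_eq_zero_of_snd_fst_ne hθ hD hDs hTD hcov i' i' hj k' k
    · exact matrixEntry_eq_zero_of_fst_ne hq0 hq1 hB hBs hTBB hi j' k' j k
  · rintro ⟨i, j, k⟩
    have hdiag : ∀ i : ℕ, 𝕄 T (i, 0, 0) (i, 0, 0) = 𝕄 T (0, 0, 0) (0, 0, 0) := by
      intro i
      induction i with
      | zero => rfl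
      | succ i ih => rw [matrixEntry_diag_succ hq1 hA hAs hTA, ih]
    have hshift := hcov i i 0 0 0 0 j k
    simp only [zero_add, sub_self, mul_zero, phase_zero, one_mul] at hshift
    rw [hshift, hdiag]

end Center

theorem polynomial_algebra_center_trivial_of_irrational_general
    (q : ℂ) (hq0 : 0 < ‖q‖) (hq1 : ‖q‖ < 1)
    (θ : ℝ) (hirr : Irrational θ)
    (A B D : UqH →L[ℂ] UqH)
    (hA : ∀ (i : ℕ) (j k : ℤ),
      A (e i j k) = ((Real.sqrt (1 - ‖q‖ ^ (2 * (i + 1))) : ℝ) : ℂ) • e (i + 1) j k)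
    (hB : ∀ (i : ℕ) (j k : ℤ), B (e i j k) = (q ^ i) • e i (j + 1) k)
    (hD : ∀ (i : ℕ) (j k : ℤ),
      D (e i j k) = Complex.exp (-(2 * (Real.pi : ℂ) * (θ : ℂ) * (j : ℂ)) * Complex.I) • e i j (k + 1))
    (hAs : ∀ (i : ℕ) (j k : ℤ),
      (star A) (e i j k) = ((Real.sqrt (1 - ‖q‖ ^ (2 * i)) : ℝ) : ℂ) • e (i - 1) j k)
    (hBs : ∀ (i : ℕ) (j k : ℤ), (star B) (e i j k) = ((starRingEnd ℂ) q ^ i) • e i (j - 1) k)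
    (hDs : ∀ (i : ℕ) (j k : ℤ),
      (star D) (e i j k) = Complex.exp ((2 * (Real.pi : ℂ) * (θ : ℂ) * (j : ℂ)) * Complex.I) • e i j (k - 1))
    (𝒪 : StarSubalgebra ℂ (UqH →L[ℂ] UqH))
    (h𝒪 : 𝒪 = StarAlgebra.adjoin ℂ ({A, B, D} : Set (UqH →L[ℂ] UqH))) :
    ∀ T ∈ 𝒪, (∀ S ∈ 𝒪, T * S = S * T) → ∃ c : ℂ, T = c • (1 : UqH →L[ℂ] UqH) := by
  intro T hT hcomm
  subst h𝒪
  have hAmem : A ∈ StarAlgebra.adjoin ℂ {A, B, D} := StarAlgebra.subset_adjoin ℂ _ (by simp)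
  have hBmem : B ∈ StarAlgebra.adjoin ℂ {A, B, D} := StarAlgebra.subset_adjoin ℂ _ (by simp)
  have hDmem : D ∈ StarAlgebra.adjoin ℂ {A, B, D} := StarAlgebra.subset_adjoin ℂ _ (by simp)
  have hcov : IsTwistedShiftCovariant θ T := by
    refine StarAlgebra.adjoin_le (S := twistedShiftCovariant θ) ?_ hT
    rintro _ (rfl | rfl | rfl)
    · exact .of_apply_eq_smul (· + 1) (fun i => ((Real.sqrt (1 - ‖q‖ ^ (2 * (i + 1))) : ℝ) : ℂ))
        0 0 fun i j k => by simpa [phase_zero] using hA i j k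
    · exact .of_apply_eq_smul id (q ^ ·) 1 0 fun i j k => by simpa [phase_zero] using hB i j k
    · exact .of_apply_eq_smul id 1 0 1 fun i j k => by simpa [phase] using hD i j k
  exact ⟨_, eq_smul_one_of_commute_generators hq0 hq1 hirr hA hAs hB hBs hD
    (fun i j k => by rw [hDs, phase_neg]) hcov (hcomm A hAmem) (hcomm B hBmem)
    (hcomm _ (mul_mem (star_mem hBmem) hBmem)) (hcomm D hDmem)⟩

/-- if `θ = arg(q)/π` is irrational, then the center of the (not necessarily
closed) star-subalgebra `𝒪 = 𝒪(U_q(2))` of `B(H)` generated by `A`, `B`, `D` and the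
identity is trivial: every element of `𝒪` commuting with all of `𝒪` is a scalar. -/
theorem polynomial_algebra_center_trivial_of_irrational
    (q : ℂ) (hq0 : 0 < ‖q‖) (hq1 : ‖q‖ < 1)
    (θ : ℝ) (hθ : θ = Complex.arg q / Real.pi) (hirr : Irrational θ)
    (A B D : UqH →L[ℂ] UqH)
    (hA : ∀ (i : ℕ) (j k : ℤ),
      A (e i j k) = ((Real.sqrt (1 - ‖q‖ ^ (2 * (i + 1))) : ℝ) : ℂ) • e (i + 1) j k)
    (hB : ∀ (i : ℕ) (j k : ℤ), B (e i j k) = (q ^ i) • e i (j + 1) k)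
    (hD : ∀ (i : ℕ) (j k : ℤ),
      D (e i j k) = Complex.exp (-(2 * (Real.pi : ℂ) * (θ : ℂ) * (j : ℂ)) * Complex.I) • e i j (k + 1))
    (hAs : ∀ (i : ℕ) (j k : ℤ),
      (star A) (e i j k) = ((Real.sqrt (1 - ‖q‖ ^ (2 * i)) : ℝ) : ℂ) • e (i - 1) j k)
    (hBs : ∀ (i : ℕ) (j k : ℤ), (star B) (e i j k) = ((starRingEnd ℂ) q ^ i) • e i (j - 1) k)
    (hDs : ∀ (i : ℕ) (j k : ℤ),
      (star D) (e i j k) = Complex.exp ((2 * (Real.pi : ℂ) * (θ : ℂ) * (j : ℂ)) * Complex.I) • e i j (k - 1))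
    (𝒪 : StarSubalgebra ℂ (UqH →L[ℂ] UqH))
    (h𝒪 : 𝒪 = StarAlgebra.adjoin ℂ ({A, B, D} : Set (UqH →L[ℂ] UqH))) :
    ∀ T ∈ 𝒪, (∀ S ∈ 𝒪, T * S = S * T) → ∃ c : ℂ, T = c • (1 : UqH →L[ℂ] UqH) :=
  polynomial_algebra_center_trivial_of_irrational_general q hq0 hq1 θ hirr A B D hA hB hD hAs hBs
    hDs 𝒪 h𝒪
end
end

section
/- Suppose q is real (so θ = (1/π)·arg(q) ∈ {0, 1} and D e_{i,j,k} = e_{i,j,k+1}). Then D commutes with every element of 𝒜; in particular, D is a non-scalar unitary lying in the center of 𝒜, so the center of 𝒜 (and of the star-subalgebra generated by A, B, D and the identity) is strictly larger than ℂ·1. -/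
open scoped InnerProductSpace
noncomputable section

/-!
For real `q` the argument of `q` is `0` or `π`, so the phase factor in `D` is trivial and `D` is
the shift `e i j k ↦ e i j (k + 1)`. Being induced by a permutation of the basis, `D` is unitary
and not scalar. `A` and `B` do not touch the index `k`, so they commute with `D`; as `D` is normal,
the Fuglede–Putnam theorem lets `D` commute with `star A` and `star B` too. Thus `D` lies in the
star-centralizer of the generators, and the closed star-subalgebra they generate lies in the
double centralizer.
-/

open scoped lp

namespace lp

variable {𝕜 ι : Type*} [RCLike 𝕜] [DecidableEq ι]

theorem ext_continuousLinearMap_single {F : Type*} [AddCommMonoid F] [Module 𝕜 F]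
    [TopologicalSpace F] [T2Space F] {p : ENNReal} [Fact (1 ≤ p)] (hp : p ≠ ⊤)
    {f g : lp (fun _ : ι => 𝕜) p →L[𝕜] F}
    (h : ∀ i, f (lp.single p i 1) = g (lp.single p i 1)) : f = g :=
  lp.ext_continuousLinearMap hp fun i => ContinuousLinearMap.ext_ring (h i)

theorem smul_single_ne_single {p : ENNReal} {i j : ι} (hij : i ≠ j) (c : 𝕜) :
    c • lp.single (E := fun _ => 𝕜) p i 1 ≠ lp.single p j 1 := fun h => by
  simpa [lp.single_apply, hij] using congr($h j)

variable {T : ℓ²(ι, 𝕜) →L[𝕜] ℓ²(ι, 𝕜)} (σ : ι ≃ ι)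

theorem adjoint_apply_single_of_apply_single
    (hT : ∀ i, T (lp.single 2 i 1) = lp.single 2 (σ i) 1) (i : ι) :
    T.adjoint (lp.single 2 i 1) = lp.single 2 (σ.symm i) 1 := by
  ext j
  have hinner := T.adjoint_inner_right (lp.single 2 j 1) (lp.single 2 i 1)
  simp only [lp.inner_single_left, hT, RCLike.inner_apply, map_one, mul_one] at hinner
  simp [hinner, lp.single_apply, Pi.single_apply, Equiv.eq_symm_apply]

theorem mem_unitary_of_apply_single (hT : ∀ i, T (lp.single 2 i 1) = lp.single 2 (σ i) 1) :
    T ∈ unitary (ℓ²(ι, 𝕜) →L[𝕜] ℓ²(ι, 𝕜)) := by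
  rw [Unitary.mem_iff, ContinuousLinearMap.star_eq_adjoint]
  constructor <;> refine ext_continuousLinearMap_single ENNReal.ofNat_ne_top fun i => ?_ <;>
    simp [hT, adjoint_apply_single_of_apply_single σ hT]

end lp

theorem IsStarNormal.commute_of_mem_topologicalClosure_adjoin {A : Type*} [CStarAlgebra A]
    {s : Set A} {u : A} (hu : IsStarNormal u) (hs : ∀ a ∈ s, Commute a u) {x : A}
    (hx : x ∈ (StarAlgebra.adjoin ℂ s).topologicalClosure) : Commute u x := by
  have hu_mem : u ∈ StarSubalgebra.centralizer ℂ s := (StarSubalgebra.mem_centralizer_iff ℂ).2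
    fun a ha => ⟨(hs a ha).eq, (hu.commute_star_right (hs a ha)).star_left.eq⟩
  exact ((StarSubalgebra.mem_centralizer_iff ℂ).1
    (StarSubalgebra.topologicalClosure_adjoin_le_centralizer_centralizer ℂ s hx) u hu_mem).1

theorem Complex.exp_arg_div_pi_mul_int_eq_one_of_im_eq_zero {q : ℂ} (hq : q.im = 0) (j : ℤ) :
    Complex.exp (-(2 * (Real.pi : ℂ) * ((Complex.arg q / Real.pi : ℝ) : ℂ) * (j : ℂ)) *
      Complex.I) = 1 := by
  obtain ⟨n, hn⟩ : ∃ n : ℤ, Complex.arg q / Real.pi = n := by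
    rcases le_or_gt 0 q.re with h | h
    · exact ⟨0, by simp [Complex.arg_eq_zero_iff.2 ⟨h, hq⟩]⟩
    · exact ⟨1, by simp [Complex.arg_eq_pi_iff.2 ⟨h, hq⟩, Real.pi_ne_zero]⟩
  rw [hn, ← Complex.exp_int_mul_two_pi_mul_I (-(n * j))]
  push_cast
  ring_nf

theorem commute_shift_of_apply_e_eq_smul_e {D T : UqH →L[ℂ] UqH}
    (hD : ∀ (i : ℕ) (j k : ℤ), D (e i j k) = e i j (k + 1))
    (c : ℕ → ℤ → ℂ) (m : ℕ → ℕ) (n : ℤ → ℤ)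
    (hT : ∀ (i : ℕ) (j k : ℤ), T (e i j k) = c i j • e (m i) (n j) k) : Commute D T :=
  lp.ext_continuousLinearMap_single ENNReal.ofNat_ne_top fun ⟨i, j, k⟩ => by
    change D (T (e i j k)) = T (D (e i j k))
    rw [hT, map_smul, hD, hD, hT]

theorem D_central_nonscalar_of_real_general
    (q : ℂ) (hqre : q.im = 0)
    (θ : ℝ) (hθ : θ = Complex.arg q / Real.pi)
    (A B D : UqH →L[ℂ] UqH)
    (hA : ∀ (i : ℕ) (j k : ℤ),
      A (e i j k) = ((Real.sqrt (1 - ‖q‖ ^ (2 * (i + 1))) : ℝ) : ℂ) • e (i + 1) j k)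
    (hB : ∀ (i : ℕ) (j k : ℤ), B (e i j k) = (q ^ i) • e i (j + 1) k)
    (hD : ∀ (i : ℕ) (j k : ℤ),
      D (e i j k) = Complex.exp (-(2 * (Real.pi : ℂ) * (θ : ℂ) * (j : ℂ)) * Complex.I) • e i j (k + 1))
    (𝒜 : StarSubalgebra ℂ (UqH →L[ℂ] UqH))
    (h𝒜 : 𝒜 = (StarAlgebra.adjoin ℂ ({A, B, D} : Set (UqH →L[ℂ] UqH))).topologicalClosure) :
    D ∈ 𝒜 ∧ (∀ S ∈ 𝒜, D * S = S * D) ∧ (D * star D = 1 ∧ star D * D = 1) ∧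
      ¬ (∃ c : ℂ, D = c • (1 : UqH →L[ℂ] UqH)) := by
  subst hθ h𝒜
  have hDe : ∀ (i : ℕ) (j k : ℤ), D (e i j k) = e i j (k + 1) := fun i j k => by
    rw [hD, Complex.exp_arg_div_pi_mul_int_eq_one_of_im_eq_zero hqre, one_smul]
  have hDu : D ∈ unitary (UqH →L[ℂ] UqH) :=
    lp.mem_unitary_of_apply_single ((Equiv.refl ℕ).prodCongr ((Equiv.refl ℤ).prodCongr
      (Equiv.addRight 1))) fun ⟨i, j, k⟩ => hDe i j k
  have hgen : ∀ a ∈ ({A, B, D} : Set (UqH →L[ℂ] UqH)), Commute a D := by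
    rintro a (rfl | rfl | rfl)
    · exact (commute_shift_of_apply_e_eq_smul_e hDe (fun i _ => _) (· + 1) id hA).symm
    · exact (commute_shift_of_apply_e_eq_smul_e hDe (fun i _ => q ^ i) id (· + 1) hB).symm
    · exact Commute.refl a
  have hDnormal : IsStarNormal D := isStarNormal_of_mem_unitary hDu
  refine ⟨StarSubalgebra.le_topologicalClosure _ (StarAlgebra.subset_adjoin ℂ _ (by simp)),
    fun S hS => (hDnormal.commute_of_mem_topologicalClosure_adjoin hgen hS).eq,
    (Unitary.mem_iff.1 hDu).symm, ?_⟩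
  rintro ⟨c, hc⟩
  have h000 := hDe 0 0 0
  rw [hc] at h000
  exact lp.smul_single_ne_single (by simp) c h000

/-- if `q` is real, then `D` commutes with every element of `𝒜 = C(U_q(2))`;
in particular `D` is a non-scalar unitary in the center of `𝒜`, so the center of `𝒜`
(and of the star-subalgebra generated by `A`, `B`, `D` and the identity) is strictly
larger than `ℂ·1`. -/
theorem D_central_nonscalar_of_real
    (q : ℂ) (hq0 : 0 < ‖q‖) (hq1 : ‖q‖ < 1) (hqre : q.im = 0)
    (θ : ℝ) (hθ : θ = Complex.arg q / Real.pi)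
    (A B D : UqH →L[ℂ] UqH)
    (hA : ∀ (i : ℕ) (j k : ℤ),
      A (e i j k) = ((Real.sqrt (1 - ‖q‖ ^ (2 * (i + 1))) : ℝ) : ℂ) • e (i + 1) j k)
    (hB : ∀ (i : ℕ) (j k : ℤ), B (e i j k) = (q ^ i) • e i (j + 1) k)
    (hD : ∀ (i : ℕ) (j k : ℤ),
      D (e i j k) = Complex.exp (-(2 * (Real.pi : ℂ) * (θ : ℂ) * (j : ℂ)) * Complex.I) • e i j (k + 1))
    (𝒜 : StarSubalgebra ℂ (UqH →L[ℂ] UqH))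
    (h𝒜 : 𝒜 = (StarAlgebra.adjoin ℂ ({A, B, D} : Set (UqH →L[ℂ] UqH))).topologicalClosure) :
    D ∈ 𝒜 ∧ (∀ S ∈ 𝒜, D * S = S * D) ∧ (D * star D = 1 ∧ star D * D = 1) ∧
      ¬ (∃ c : ℂ, D = c • (1 : UqH →L[ℂ] UqH)) :=
  D_central_nonscalar_of_real_general q hqre θ hθ A B D hA hB hD 𝒜 h𝒜
end
end

section
/- The conditional expectation E_φ admits no finite quasi-basis on 𝒜: there do not exist n ∈ ℕ and elements u₁, …, uₙ, v₁, …, vₙ ∈ 𝒜 such that x = Σᵢ uᵢ·E_φ(vᵢ·x) and x = Σᵢ E_φ(x·uᵢ)·vᵢ for all x ∈ 𝒜. Consequently, E_φ is not of index-finite type, i.e., it has infinite Watatani index. -/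
open scoped InnerProductSpace
open MeasureTheory
noncomputable section

instance : MeasurableSpace Circle := borel Circle
instance : BorelSpace Circle := ⟨rfl⟩

/-!
The circle action `W` grades `H` by the index `k`, and `E_φ` averages over it, so `E_φ(y) e_{0,0,0}`
lies in degree `k = 0`. The weighted shifts `A`, `B`, `D` move `k` by `0, 0, 1`, hence every element
of the `*`-algebra they generate has only finitely many degree differences in its matrix. Given a
quasi-basis, approximate each `uᵢ` within `ε` by such an element `uᵢ'` and take `m` beyond all their
degrees. For `x = Dᵐ` the `e_{0,0,m}`-coordinate of `∑ uᵢ E_φ(vᵢ x) e_{0,0,0} = e_{0,0,m}` is `1`,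
but the `uᵢ'` contribute nothing to it, so it is at most `ε ∑ ‖vᵢ‖ < 1`.
-/

open scoped ENNReal Pointwise lp

section L2

variable {ι : Type*} [DecidableEq ι]

def l2Basis (t : ι) : ℓ²(ι, ℂ) := lp.single 2 t 1

lemma l2Basis_apply (t s : ι) : l2Basis t s = if s = t then 1 else 0 := by
  simp [l2Basis, lp.single_apply, Pi.single_apply]

lemma l2_apply_eq_inner (f : ℓ²(ι, ℂ)) (t : ι) : f t = ⟪l2Basis t, f⟫_ℂ := by
  simp [l2Basis, lp.inner_single_left]

lemma hasSum_l2Basis (f : ℓ²(ι, ℂ)) : HasSum (fun t => f t • l2Basis t) f := by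
  convert lp.hasSum_single ENNReal.ofNat_ne_top f using 2 with t
  rw [l2Basis, ← lp.single_smul, smul_eq_mul, mul_one]

lemma ContinuousLinearMap.hasSum_l2_apply (T : ℓ²(ι, ℂ) →L[ℂ] ℓ²(ι, ℂ)) (f : ℓ²(ι, ℂ))
    (s : ι) : HasSum (fun t => f t * T (l2Basis t) s) (T f s) := by
  have := (innerSL ℂ (l2Basis s)).hasSum (T.hasSum (hasSum_l2Basis f))
  simpa only [innerSL_apply_apply, map_smul, inner_smul_right, ← l2_apply_eq_inner, smul_eq_mul]
    using this

lemma ContinuousLinearMap.l2_apply_eq_zero (T : ℓ²(ι, ℂ) →L[ℂ] ℓ²(ι, ℂ)) {f : ℓ²(ι, ℂ)} {s : ι}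
    (h : ∀ t, f t = 0 ∨ T (l2Basis t) s = 0) : T f s = 0 := by
  have hsum := T.hasSum_l2_apply f s
  rw [show (fun t => f t * T (l2Basis t) s) = fun _ => 0 from funext fun t => mul_eq_zero.2 (h t)]
    at hsum
  exact hsum.unique hasSum_zero

lemma star_l2_apply (T : ℓ²(ι, ℂ) →L[ℂ] ℓ²(ι, ℂ)) (s t : ι) :
    star T (l2Basis t) s = starRingEnd ℂ (T (l2Basis s) t) := by
  rw [l2_apply_eq_inner, ContinuousLinearMap.star_eq_adjoint,
    ContinuousLinearMap.adjoint_inner_right, ← inner_conj_symm, ← l2_apply_eq_inner]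

end L2

section Degrees

variable {ι : Type*} [DecidableEq ι] (deg : ι → ℤ)

def HasDegreesIn (F : Finset ℤ) (T : ℓ²(ι, ℂ) →L[ℂ] ℓ²(ι, ℂ)) : Prop :=
  ∀ s t, T (l2Basis t) s ≠ 0 → deg s - deg t ∈ F

variable {deg}

lemma hasDegreesIn_of_apply_l2Basis {T : ℓ²(ι, ℂ) →L[ℂ] ℓ²(ι, ℂ)} (σ : ι → ι) (c : ι → ℂ)
    (d : ℤ) (hT : ∀ t, T (l2Basis t) = c t • l2Basis (σ t)) (hσ : ∀ t, deg (σ t) = deg t + d) :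
    HasDegreesIn deg {d} T := by
  intro s t hst
  rw [hT, lp.coeFn_smul, Pi.smul_apply, l2Basis_apply] at hst
  obtain rfl : s = σ t := by_contra fun h => hst (by simp [h])
  simp [hσ]

lemma hasDegreesIn_algebraMap (c : ℂ) :
    HasDegreesIn deg {0} (algebraMap ℂ (ℓ²(ι, ℂ) →L[ℂ] ℓ²(ι, ℂ)) c) :=
  hasDegreesIn_of_apply_l2Basis id (fun _ => c) 0
    (fun t => by simp [Algebra.algebraMap_eq_smul_one]) fun t => by simp

lemma HasDegreesIn.add {F F' : Finset ℤ} {T T' : ℓ²(ι, ℂ) →L[ℂ] ℓ²(ι, ℂ)}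
    (h : HasDegreesIn deg F T) (h' : HasDegreesIn deg F' T') :
    HasDegreesIn deg (F ∪ F') (T + T') := by
  intro s t hst
  by_cases hT : T (l2Basis t) s = 0
  · simp only [add_apply, lp.coeFn_add, Pi.add_apply, hT, zero_add] at hst
    exact Finset.mem_union_right _ (h' s t hst)
  · exact Finset.mem_union_left _ (h s t hT)

lemma HasDegreesIn.mul {F F' : Finset ℤ} {T T' : ℓ²(ι, ℂ) →L[ℂ] ℓ²(ι, ℂ)}
    (h : HasDegreesIn deg F T) (h' : HasDegreesIn deg F' T') :
    HasDegreesIn deg (F + F') (T * T') := by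
  intro s t hst
  obtain ⟨r, hr', hr⟩ : ∃ r, T' (l2Basis t) r ≠ 0 ∧ T (l2Basis r) s ≠ 0 := by
    by_contra! hc
    exact hst (T.l2_apply_eq_zero fun r => or_iff_not_imp_left.2 (hc r))
  rw [← sub_add_sub_cancel _ (deg r)]
  exact Finset.add_mem_add (h s r hr) (h' r t hr')

lemma HasDegreesIn.star {F : Finset ℤ} {T : ℓ²(ι, ℂ) →L[ℂ] ℓ²(ι, ℂ)}
    (h : HasDegreesIn deg F T) : HasDegreesIn deg (-F) (star T) := by
  intro s t hst
  rw [star_l2_apply, map_ne_zero] at hst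
  exact Finset.mem_neg.2 ⟨_, h t s hst, neg_sub _ _⟩

lemma exists_hasDegreesIn_of_mem_adjoin {S : Set (ℓ²(ι, ℂ) →L[ℂ] ℓ²(ι, ℂ))}
    (hS : ∀ T ∈ S, ∃ F, HasDegreesIn deg F T) {T : ℓ²(ι, ℂ) →L[ℂ] ℓ²(ι, ℂ)}
    (hT : T ∈ StarAlgebra.adjoin ℂ S) : ∃ F, HasDegreesIn deg F T := by
  induction hT using StarAlgebra.adjoin_induction with
  | mem T hT => exact hS T hT
  | algebraMap c => exact ⟨_, hasDegreesIn_algebraMap c⟩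
  | add _ _ _ _ ih ih' => exact ih.elim fun _ hF => ih'.elim fun _ hF' => ⟨_, hF.add hF'⟩
  | mul _ _ _ _ ih ih' => exact ih.elim fun _ hF => ih'.elim fun _ hF' => ⟨_, hF.mul hF'⟩
  | star _ _ ih => exact ih.elim fun _ hF => ⟨_, hF.star⟩

lemma HasDegreesIn.apply_eq_zero {F : Finset ℤ} {T : ℓ²(ι, ℂ) →L[ℂ] ℓ²(ι, ℂ)}
    (h : HasDegreesIn deg F T) {f : ℓ²(ι, ℂ)} (hf : ∀ t, deg t ≠ 0 → f t = 0) {s : ι}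
    (hs : deg s ∉ F) : T f s = 0 := by
  refine T.l2_apply_eq_zero fun t => ?_
  by_cases ht : deg t = 0
  · exact Or.inr (by_contra fun hne => hs (by simpa [ht] using h s t hne))
  · exact Or.inl (hf t ht)

end Degrees

lemma Circle.continuous_coe_zpow (k : ℤ) : Continuous fun z : Circle => (z : ℂ) ^ k :=
  continuous_subtype_val.zpow₀ k fun z => Or.inl (Circle.coe_ne_zero z)

lemma Circle.integral_coe_zpow_eq_zero (μ : Measure Circle) [μ.IsMulLeftInvariant] {k : ℤ}
    (hk : k ≠ 0) : ∫ z, (z : ℂ) ^ k ∂μ = 0 := by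
  -- rotating by `w` with `w ^ k = -1` negates the integral
  set w := Circle.exp (Real.pi / k)
  have hw : (w : ℂ) ^ k = -1 := by
    rw [Circle.coe_exp, ← Complex.exp_int_mul, ← Complex.exp_pi_mul_I]
    congr 1
    push_cast
    field_simp
  have hrot := integral_mul_left_eq_self (μ := μ) (fun z : Circle => (z : ℂ) ^ k) w
  simp only [Circle.coe_mul, mul_zpow, integral_const_mul, hw] at hrot
  linear_combination (-1 / 2 : ℂ) * hrot

section CircleAction

variable {ι : Type*} [DecidableEq ι] {deg : ι → ℤ} {W : Circle → ℓ²(ι, ℂ) →L[ℂ] ℓ²(ι, ℂ)}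
  (hW : ∀ z t, W z (l2Basis t) = (z : ℂ) ^ deg t • l2Basis t)
include hW

lemma circleAction_apply (z : Circle) (f : ℓ²(ι, ℂ)) (t : ι) :
    W z f t = (z : ℂ) ^ deg t * f t := by
  have hsum := (W z).hasSum_l2_apply f t
  rw [show (fun s => f s * W z (l2Basis s) t) =
      fun s => if s = t then (z : ℂ) ^ deg t * f t else 0 from funext fun s => by
      by_cases hst : s = t
      · simp [hst, hW, l2Basis_apply, mul_comm]
      · simp [hst, hW, l2Basis_apply, Ne.symm hst]] at hsum
  exact hsum.unique (hasSum_ite_eq t _)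

lemma star_circleAction_l2Basis_of_deg_eq_zero (z : Circle) {t : ι} (ht : deg t = 0) :
    star (W z) (l2Basis t) = l2Basis t := by
  ext s
  rw [star_l2_apply, hW, lp.coeFn_smul, Pi.smul_apply, l2Basis_apply, l2Basis_apply]
  by_cases hst : t = s
  · subst hst; simp [ht]
  · simp [hst, Ne.symm hst]

lemma norm_circleAction_apply (z : Circle) (f : ℓ²(ι, ℂ)) : ‖W z f‖ = ‖f‖ := by
  have h2 : (0 : ℝ) < (2 : ℝ≥0∞).toReal := by norm_num
  refine (Real.rpow_left_injOn h2.ne' (norm_nonneg _) (norm_nonneg _) ?_)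
  dsimp only
  rw [lp.norm_rpow_eq_tsum h2, lp.norm_rpow_eq_tsum h2]
  congr 1 with t
  rw [circleAction_apply hW, norm_mul, norm_zpow, Circle.norm_coe, one_zpow, one_mul]

lemma continuous_circleAction_apply (f : ℓ²(ι, ℂ)) : Continuous fun z => W z f := by
  -- uniform limit of the finite partial sums of `f`, on which the action is visibly continuous
  have hunif : TendstoUniformly (fun (s : Finset ι) z => W z (∑ t ∈ s, f t • l2Basis t))
      (fun z => W z f) Filter.atTop := by
    rw [Metric.tendstoUniformly_iff]
    intro ε hε
    filter_upwards [Metric.tendsto_nhds.mp (hasSum_l2Basis f) ε hε] with s hs z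
    rwa [dist_eq_norm, ← map_sub, norm_circleAction_apply hW, ← dist_eq_norm, dist_comm]
  refine hunif.continuous (Filter.Eventually.frequently (Filter.Eventually.of_forall fun s => ?_))
  simp only [map_sum, map_smul, hW, smul_smul]
  exact continuous_finsetSum _ fun t _ =>
    (continuous_const.mul (Circle.continuous_coe_zpow _)).smul continuous_const

variable (μ : Measure Circle)

lemma integral_circleAction_apply_eq_zero [IsFiniteMeasure μ] [μ.IsMulLeftInvariant]
    (f : ℓ²(ι, ℂ)) {t : ι} (ht : deg t ≠ 0) : (∫ z, W z f ∂μ) t = 0 := by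
  have hint : Integrable (fun z => W z f) μ :=
    (continuous_circleAction_apply hW f).integrable_of_hasCompactSupport
      (HasCompactSupport.of_compactSpace _)
  rw [l2_apply_eq_inner, ← innerSL_apply_apply,
    ← (innerSL ℂ (l2Basis t)).integral_comp_comm hint]
  simp only [innerSL_apply_apply, ← l2_apply_eq_inner, circleAction_apply hW]
  rw [integral_mul_const, Circle.integral_coe_zpow_eq_zero μ ht, zero_mul]

lemma norm_integral_circleAction_apply_le [IsProbabilityMeasure μ] (f : ℓ²(ι, ℂ)) :
    ‖∫ z, W z f ∂μ‖ ≤ ‖f‖ :=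
  calc ‖∫ z, W z f ∂μ‖ ≤ ∫ z, ‖W z f‖ ∂μ := norm_integral_le_integral_norm _
    _ = ‖f‖ := by simp [norm_circleAction_apply hW]

end CircleAction

lemma one_le_sum_norm_sub_mul_norm {ι κ : Type*} [Fintype κ]
    (u u' : κ → ℓ²(ι, ℂ) →L[ℂ] ℓ²(ι, ℂ)) (η : κ → ℓ²(ι, ℂ)) (s : ι)
    (hsum : ∑ i, u i (η i) s = 1) (hu' : ∀ i, u' i (η i) s = 0) :
    1 ≤ ∑ i, ‖u i - u' i‖ * ‖η i‖ :=
  calc (1 : ℝ) = ‖∑ i, (u i - u' i) (η i) s‖ := by simp [sub_apply, hu', hsum]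
    _ ≤ ∑ i, ‖(u i - u' i) (η i) s‖ := norm_sum_le _ _
    _ ≤ ∑ i, ‖u i - u' i‖ * ‖η i‖ := Finset.sum_le_sum fun i _ =>
        (lp.norm_apply_le_norm two_ne_zero _ s).trans ((u i - u' i).le_opNorm _)

section QuasiBasis

variable {ι : Type*} [DecidableEq ι] {deg : ι → ℤ} {W : Circle → ℓ²(ι, ℂ) →L[ℂ] ℓ²(ι, ℂ)}
  (hW : ∀ z t, W z (l2Basis t) = (z : ℂ) ^ deg t • l2Basis t)
  (μ : Measure Circle) [IsProbabilityMeasure μ] [μ.IsMulLeftInvariant]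
  {E : (ℓ²(ι, ℂ) →L[ℂ] ℓ²(ι, ℂ)) → (ℓ²(ι, ℂ) →L[ℂ] ℓ²(ι, ℂ))}
  (hE : ∀ x ξ, E x ξ = ∫ z, W z (x (star (W z) ξ)) ∂μ)
include hW hE

lemma one_le_sum_norm_sub_mul_of_eq_sum_mul_average {κ : Type*} [Fintype κ]
    (u u' v : κ → ℓ²(ι, ℂ) →L[ℂ] ℓ²(ι, ℂ)) {F : κ → Finset ℤ}
    (hF : ∀ i, HasDegreesIn deg (F i) (u' i)) {x : ℓ²(ι, ℂ) →L[ℂ] ℓ²(ι, ℂ)}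
    (hx : x = ∑ i, u i * E (v i * x)) {s t : ι} (ht : deg t = 0) (hs : ∀ i, deg s ∉ F i)
    (hxst : x (l2Basis t) s = 1) :
    1 ≤ ∑ i, ‖u i - u' i‖ * (‖v i‖ * ‖x (l2Basis t)‖) := by
  have hE_apply : ∀ i, E (v i * x) (l2Basis t) = ∫ z, W z (v i (x (l2Basis t))) ∂μ :=
    fun i => by simp only [hE, star_circleAction_l2Basis_of_deg_eq_zero hW _ ht, mul_apply_eq_comp]
  have hsum : ∑ i, u i (E (v i * x) (l2Basis t)) s = 1 := by
    rw [← hxst]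
    conv_rhs => rw [hx]
    simp only [sum_apply, lp.coeFn_sum, Finset.sum_apply, mul_apply_eq_comp]
  refine (one_le_sum_norm_sub_mul_norm u u' _ s hsum fun i => ?_).trans
    (Finset.sum_le_sum fun i _ => mul_le_mul_of_nonneg_left ?_ (norm_nonneg _))
  · refine (hF i).apply_eq_zero (fun r hr => ?_) (hs i)
    rw [hE_apply]
    exact integral_circleAction_apply_eq_zero hW μ _ hr
  · rw [hE_apply]
    exact (norm_integral_circleAction_apply_le hW μ _).trans ((v i).le_opNorm _)

end QuasiBasis

lemma exists_natCast_forall_notMem {κ : Type*} [Fintype κ] (F : κ → Finset ℤ) :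
    ∃ m : ℕ, ∀ i, (m : ℤ) ∉ F i := by
  obtain ⟨_, ⟨m, rfl⟩, hm⟩ :=
    (Set.infinite_range_of_injective Nat.cast_injective).exists_notMem_finset
      (Finset.univ.biUnion F)
  exact ⟨m, fun i hi => hm (Finset.mem_biUnion.2 ⟨i, Finset.mem_univ _, hi⟩)⟩

lemma e_eq_l2Basis (t : ℕ × ℤ × ℤ) : e t.1 t.2.1 t.2.2 = l2Basis t := rfl

lemma norm_e (i : ℕ) (j k : ℤ) : ‖e i j k‖ = 1 := by
  rw [e, lp.norm_single two_pos, norm_one]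

lemma exists_hasDegreesIn_of_mem_adjoin_weightedShifts {A B D : UqH →L[ℂ] UqH}
    {a b d : ℕ → ℤ → ℤ → ℂ} (hA : ∀ i j k, A (e i j k) = a i j k • e (i + 1) j k)
    (hB : ∀ i j k, B (e i j k) = b i j k • e i (j + 1) k)
    (hD : ∀ i j k, D (e i j k) = d i j k • e i j (k + 1)) {T : UqH →L[ℂ] UqH}
    (hT : T ∈ StarAlgebra.adjoin ℂ {A, B, D}) : ∃ F, HasDegreesIn (fun t => t.2.2) F T := by
  refine exists_hasDegreesIn_of_mem_adjoin ?_ hT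
  rintro T (rfl | rfl | rfl)
  · exact ⟨_, hasDegreesIn_of_apply_l2Basis (fun t => (t.1 + 1, t.2)) _ 0
      (fun t => hA t.1 t.2.1 t.2.2) fun t => (add_zero _).symm⟩
  · exact ⟨_, hasDegreesIn_of_apply_l2Basis (fun t => (t.1, t.2.1 + 1, t.2.2)) _ 0
      (fun t => hB t.1 t.2.1 t.2.2) fun t => (add_zero _).symm⟩
  · exact ⟨_, hasDegreesIn_of_apply_l2Basis (fun t => (t.1, t.2.1, t.2.2 + 1)) _ 1
      (fun t => hD t.1 t.2.1 t.2.2) fun t => rfl⟩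

lemma pow_apply_e_zero {D : UqH →L[ℂ] UqH} (hD : ∀ k, D (e 0 0 k) = e 0 0 (k + 1)) (m : ℕ) :
    (D ^ m) (e 0 0 0) = e 0 0 m := by
  induction m with
  | zero => rfl
  | succ m ih => rw [pow_succ', mul_apply_eq_comp, ih, hD, Nat.cast_succ]

theorem Ephi_no_finite_quasi_basis_general
    (q : ℂ) (θ : ℝ)
    (A B D : UqH →L[ℂ] UqH)
    (hA : ∀ (i : ℕ) (j k : ℤ),
      A (e i j k) = ((Real.sqrt (1 - ‖q‖ ^ (2 * (i + 1))) : ℝ) : ℂ) • e (i + 1) j k)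
    (hB : ∀ (i : ℕ) (j k : ℤ), B (e i j k) = (q ^ i) • e i (j + 1) k)
    (hD : ∀ (i : ℕ) (j k : ℤ),
      D (e i j k) = Complex.exp (-(2 * (Real.pi : ℂ) * (θ : ℂ) * (j : ℂ)) * Complex.I) • e i j (k + 1))
    (𝒜 : StarSubalgebra ℂ (UqH →L[ℂ] UqH))
    (h𝒜 : 𝒜 = (StarAlgebra.adjoin ℂ ({A, B, D} : Set (UqH →L[ℂ] UqH))).topologicalClosure)
    -- `W z` is the diagonal unitary `e_{i,j,k} ↦ z^k e_{i,j,k}`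
    (W : Circle → (UqH →L[ℂ] UqH))
    (hW : ∀ (z : Circle) (i : ℕ) (j k : ℤ), W z (e i j k) = ((z : ℂ) ^ k) • e i j k)
    -- `μ` is the normalized Haar (arc-length) probability measure on the circle
    (μ : Measure Circle) (hμ : μ.IsHaarMeasure) (hμ1 : IsProbabilityMeasure μ)
    -- `E_φ` is the averaging `x ↦ ∫ W z x W z* dμ(z)` (Bochner integral pointwise)
    (Eφ : (UqH →L[ℂ] UqH) → (UqH →L[ℂ] UqH))
    (hEφ : ∀ (x : UqH →L[ℂ] UqH) (ξ : UqH),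
      Eφ x ξ = ∫ z : Circle, W z (x ((star (W z)) ξ)) ∂μ) :
    ¬ ∃ (n : ℕ) (u v : Fin n → (UqH →L[ℂ] UqH)),
        (∀ i, u i ∈ 𝒜) ∧ (∀ i, v i ∈ 𝒜) ∧
        ∀ x ∈ 𝒜, (x = ∑ i, u i * Eφ (v i * x)) ∧ (x = ∑ i, Eφ (x * u i) * v i) := by
  rintro ⟨n, u, v, hu, -, hquasi⟩
  subst h𝒜
  set ε := (∑ i, ‖v i‖ + 1)⁻¹
  have hε : 0 < ε := by positivity
  choose u' hu'_mem hu'_near using fun i => Metric.mem_closure_iff.1 (hu i) ε hε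
  choose F hF using fun i => exists_hasDegreesIn_of_mem_adjoin_weightedShifts hA hB hD (hu'_mem i)
  obtain ⟨m, hm⟩ := exists_natCast_forall_notMem F
  have hDm : (D ^ m) (e 0 0 0) = e 0 0 m := pow_apply_e_zero (fun k => by simpa using hD 0 0 k) m
  have hDm_mem : D ^ m ∈ (StarAlgebra.adjoin ℂ {A, B, D}).topologicalClosure :=
    pow_mem (StarSubalgebra.le_topologicalClosure _ (StarAlgebra.subset_adjoin ℂ _ (by simp))) m
  have key := one_le_sum_norm_sub_mul_of_eq_sum_mul_average (fun z t => hW z t.1 t.2.1 t.2.2) μ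
    hEφ u u' v hF (hquasi _ hDm_mem).1 (s := (0, 0, m)) (t := (0, 0, 0)) rfl hm
    (by rw [← e_eq_l2Basis, hDm]; exact (l2Basis_apply _ _).trans (if_pos rfl))
  rw [← e_eq_l2Basis, hDm, norm_e] at key
  have hsmall : ∑ i, ‖u i - u' i‖ * (‖v i‖ * 1) ≤ ε * ∑ i, ‖v i‖ := by
    rw [Finset.mul_sum]
    exact Finset.sum_le_sum fun i _ => by
      simpa [← dist_eq_norm] using mul_le_mul_of_nonneg_right (hu'_near i).le (norm_nonneg (v i))
  have hεV : ε * ∑ i, ‖v i‖ < 1 := by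
    rw [inv_mul_lt_iff₀ (by positivity)]
    linarith
  linarith

/-- the conditional expectation `E_φ : C(U_q(2)) → C(U_q(2)/_φ 𝕋)` admits no
finite quasi-basis, i.e. it is not of index-finite type (infinite Watatani index). -/
theorem Ephi_no_finite_quasi_basis
    (q : ℂ) (hq0 : 0 < ‖q‖) (hq1 : ‖q‖ < 1)
    (θ : ℝ) (hθ : θ = Complex.arg q / Real.pi)
    (A B D : UqH →L[ℂ] UqH)
    (hA : ∀ (i : ℕ) (j k : ℤ),
      A (e i j k) = ((Real.sqrt (1 - ‖q‖ ^ (2 * (i + 1))) : ℝ) : ℂ) • e (i + 1) j k)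
    (hB : ∀ (i : ℕ) (j k : ℤ), B (e i j k) = (q ^ i) • e i (j + 1) k)
    (hD : ∀ (i : ℕ) (j k : ℤ),
      D (e i j k) = Complex.exp (-(2 * (Real.pi : ℂ) * (θ : ℂ) * (j : ℂ)) * Complex.I) • e i j (k + 1))
    (𝒜 : StarSubalgebra ℂ (UqH →L[ℂ] UqH))
    (h𝒜 : 𝒜 = (StarAlgebra.adjoin ℂ ({A, B, D} : Set (UqH →L[ℂ] UqH))).topologicalClosure)
    -- `W z` is the diagonal unitary `e_{i,j,k} ↦ z^k e_{i,j,k}`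
    (W : Circle → (UqH →L[ℂ] UqH))
    (hW : ∀ (z : Circle) (i : ℕ) (j k : ℤ), W z (e i j k) = ((z : ℂ) ^ k) • e i j k)
    -- `μ` is the normalized Haar (arc-length) probability measure on the circle
    (μ : Measure Circle) (hμ : μ.IsHaarMeasure) (hμ1 : IsProbabilityMeasure μ)
    -- `E_φ` is the averaging `x ↦ ∫ W z x W z* dμ(z)` (Bochner integral pointwise)
    (Eφ : (UqH →L[ℂ] UqH) → (UqH →L[ℂ] UqH))
    (hEφ : ∀ (x : UqH →L[ℂ] UqH) (ξ : UqH),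
      Eφ x ξ = ∫ z : Circle, W z (x ((star (W z)) ξ)) ∂μ) :
    ¬ ∃ (n : ℕ) (u v : Fin n → (UqH →L[ℂ] UqH)),
        (∀ i, u i ∈ 𝒜) ∧ (∀ i, v i ∈ 𝒜) ∧
        ∀ x ∈ 𝒜, (x = ∑ i, u i * Eφ (v i * x)) ∧ (x = ∑ i, Eφ (x * u i) * v i) :=
  Ephi_no_finite_quasi_basis_general q θ A B D hA hB hD 𝒜 h𝒜 W hW μ hμ hμ1 Eφ hEφ
end
end

section
/- The conditional expectation E_ψ admits no finite quasi-basis on 𝒜: there do not exist n ∈ ℕ and elements u₁, …, uₙ, v₁, …, vₙ ∈ 𝒜 such that x = Σᵢ uᵢ·E_ψ(vᵢ·x) and x = Σᵢ E_ψ(x·uᵢ)·vᵢ for all x ∈ 𝒜. Consequently, E_ψ is not of index-finite type, i.e., it has infinite Watatani index. -/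
open scoped InnerProductSpace
open MeasureTheory
noncomputable section

/-!
Conjugation by `W` is an action of the circle on `B(H)` and `E_ψ` averages over it, so `E_ψ`
is a contraction that kills every operator homogeneous of nonzero degree. `A` is homogeneous
of degree `1` and `B`, `D` of degree `0`, hence the star-algebra they generate is spanned by
homogeneous operators, and for each `v` in it `E_ψ (v * A ^ m) = 0` once `m` is large. By
density, `‖E_ψ (v * A ^ m)‖ ≤ ε ‖A ^ m‖` for large `m` and every `v ∈ 𝒜`. The identity
`A ^ m = ∑ uᵢ E_ψ (vᵢ A ^ m)` with `ε` small then forces `A ^ m = 0`, which is absurd since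
`A` is a weighted shift with nonzero weights.
-/

lemma continuous_apply_of_dense_span {𝕜 X F G : Type*} [NontriviallyNormedField 𝕜]
    [TopologicalSpace X] [NormedAddCommGroup F] [NormedSpace 𝕜 F] [NormedAddCommGroup G]
    [NormedSpace 𝕜 G] {T : X → F →L[𝕜] G} {C : ℝ} (hC : ∀ x, ‖T x‖ ≤ C) {s : Set F}
    (hs : Dense (Submodule.span 𝕜 s : Set F)) (hT : ∀ η ∈ s, Continuous fun x => T x η)
    (ξ : F) : Continuous fun x => T x ξ := by
  have hspan : ∀ η ∈ Submodule.span 𝕜 s, Continuous fun x => T x η := fun η hη => by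
    induction hη using Submodule.span_induction with
    | mem η hη => exact hT η hη
    | zero => simpa using continuous_const
    | add η η' _ _ h h' => exact (h.add h').congr fun x => (map_add (T x) η η').symm
    | smul c η _ h => exact (h.const_smul c).congr fun x => (map_smul (T x) c η).symm
  obtain ⟨η, hη, hlim⟩ := mem_closure_iff_seq_limit.1 (hs ξ)
  refine TendstoUniformly.continuous (F := fun n x => T x (η n)) (p := Filter.atTop) ?_
    (Filter.Frequently.of_forall fun n => hspan _ (hη n))
  rw [Metric.tendstoUniformly_iff]
  intro ε hε
  have hsmall : Filter.Tendsto (fun n => C * ‖η n - ξ‖) Filter.atTop (nhds 0) := by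
    simpa using (tendsto_iff_norm_sub_tendsto_zero.1 hlim).const_mul C
  filter_upwards [hsmall.eventually (gt_mem_nhds hε)] with n hn x
  rw [dist_comm, dist_eq_norm, ← map_sub]
  exact (((T x).le_opNorm _).trans
    (mul_le_mul_of_nonneg_right (hC x) (norm_nonneg _))).trans_lt hn

lemma continuous_apply_apply_of_norm_le {𝕜 X F G : Type*} [NontriviallyNormedField 𝕜]
    [TopologicalSpace X] [NormedAddCommGroup F] [NormedSpace 𝕜 F] [NormedAddCommGroup G]
    [NormedSpace 𝕜 G] {T : X → F →L[𝕜] G} {C : ℝ} (hT : ∀ ξ, Continuous fun x => T x ξ)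
    (hC : ∀ x, ‖T x‖ ≤ C) {g : X → F} (hg : Continuous g) : Continuous fun x => T x (g x) := by
  refine continuous_iff_continuousAt.2 fun x₀ => ?_
  have hsplit : (fun x => T x (g x)) = fun x => T x (g x - g x₀) + T x (g x₀) := by
    ext x; simp
  have hsmall : Filter.Tendsto (fun x => T x (g x - g x₀)) (nhds x₀) (nhds 0) := by
    refine squeeze_zero_norm (fun x => ((T x).le_opNorm _).trans
      (mul_le_mul_of_nonneg_right (hC x) (norm_nonneg _))) ?_
    have hg₀ : Continuous fun x => g x - g x₀ := hg.sub continuous_const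
    simpa using (hg₀.norm.const_mul C).tendsto x₀
  rw [ContinuousAt, hsplit]
  simpa using hsmall.add ((hT (g x₀)).tendsto x₀)

lemma Circle.exists_zpow_eq_neg_one {d : ℤ} (hd : d ≠ 0) : ∃ g : Circle, (g : ℂ) ^ d = -1 := by
  refine ⟨Circle.exp (Real.pi / d), ?_⟩
  rw [Circle.coe_exp, ← Complex.exp_int_mul, ← Complex.exp_pi_mul_I]
  congr 1
  have hd' : (d : ℂ) ≠ 0 := by exact_mod_cast hd
  push_cast
  field_simp

lemma eq_zero_of_eq_sum_mul_of_norm_le {R ι : Type*} [NormedRing R] [Fintype ι] {x : R}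
    {u y : ι → R} {ε : ℝ} (hx : x = ∑ i, u i * y i) (hy : ∀ i, ‖y i‖ ≤ ε * ‖x‖)
    (hε : ε * ∑ i, ‖u i‖ < 1) : x = 0 := by
  have hle : ‖x‖ ≤ (ε * ∑ i, ‖u i‖) * ‖x‖ :=
    calc ‖x‖ ≤ ∑ i, ‖u i * y i‖ := hx ▸ norm_sum_le _ _
      _ ≤ ∑ i, ‖u i‖ * (ε * ‖x‖) :=
        Finset.sum_le_sum fun i _ => (norm_mul_le _ _).trans
          (mul_le_mul_of_nonneg_left (hy i) (norm_nonneg _))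
      _ = (ε * ∑ i, ‖u i‖) * ‖x‖ := by rw [← Finset.sum_mul]; ring
  exact norm_le_zero_iff.1 (by nlinarith [norm_nonneg x])

section CircleAction

variable {H : Type*} [NormedAddCommGroup H] [InnerProductSpace ℂ H] [CompleteSpace H]
  {W : Circle → H →L[ℂ] H}

def IsHomogeneous (W : Circle → H →L[ℂ] H) (d : ℤ) (x : H →L[ℂ] H) : Prop :=
  ∀ z : Circle, W z * x * star (W z) = ((z : ℂ) ^ d) • x

def homogeneousElements (W : Circle → H →L[ℂ] H) : Set (H →L[ℂ] H) :=
  {x | ∃ d, IsHomogeneous W d x}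

section Unitary

variable (hWu : ∀ z, W z ∈ unitary (H →L[ℂ] H))
include hWu

lemma IsHomogeneous.of_mul_eq {d : ℤ} {x : H →L[ℂ] H}
    (hx : ∀ z : Circle, W z * x = ((z : ℂ) ^ d) • (x * W z)) : IsHomogeneous W d x := fun z => by
  rw [hx, smul_mul_assoc, mul_assoc, Unitary.mul_star_self_of_mem (hWu z), mul_one]

lemma isHomogeneous_one : IsHomogeneous W 0 1 := fun z => by
  simp [Unitary.mul_star_self_of_mem (hWu z)]

lemma IsHomogeneous.mul {d d' : ℤ} {x y : H →L[ℂ] H} (hx : IsHomogeneous W d x)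
    (hy : IsHomogeneous W d' y) : IsHomogeneous W (d + d') (x * y) := fun z => by
  have hsplit : (W z * x * star (W z)) * (W z * y * star (W z)) = W z * (x * y) * star (W z) := by
    simp only [mul_assoc]
    rw [← mul_assoc (star (W z)) (W z), Unitary.star_mul_self_of_mem (hWu z), one_mul]
  rw [← hsplit, hx, hy, smul_mul_smul_comm, zpow_add₀ (Circle.coe_ne_zero z)]

lemma IsHomogeneous.pow {x : H →L[ℂ] H} (hx : IsHomogeneous W 1 x) (m : ℕ) :
    IsHomogeneous W m (x ^ m) := by
  induction m with
  | zero => simpa using isHomogeneous_one hWu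
  | succ m ih => simpa [pow_succ] using ih.mul hWu hx

lemma span_homogeneousElements_mul_mem {x y : H →L[ℂ] H}
    (hx : x ∈ Submodule.span ℂ (homogeneousElements W))
    (hy : y ∈ Submodule.span ℂ (homogeneousElements W)) :
    x * y ∈ Submodule.span ℂ (homogeneousElements W) := by
  induction hx using Submodule.span_induction with
  | mem a ha =>
    induction hy using Submodule.span_induction with
    | mem b hb =>
      obtain ⟨d, hd⟩ := ha
      obtain ⟨d', hd'⟩ := hb
      exact Submodule.subset_span ⟨d + d', hd.mul hWu hd'⟩
    | zero => simp
    | add b c _ _ hb hc => rw [mul_add]; exact add_mem hb hc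
    | smul c b _ hb => rw [mul_smul_comm]; exact Submodule.smul_mem _ _ hb
  | zero => simp
  | add a b _ _ ha hb => rw [add_mul]; exact add_mem ha hb
  | smul c a _ ha => rw [smul_mul_assoc]; exact Submodule.smul_mem _ _ ha

end Unitary

lemma IsHomogeneous.star {d : ℤ} {x : H →L[ℂ] H} (hx : IsHomogeneous W d x) :
    IsHomogeneous W (-d) (star x) := fun z => by
  have h := congrArg Star.star (hx z)
  rwa [star_mul, star_mul, star_star, ← mul_assoc, star_smul, RCLike.star_def, map_zpow₀,
    ← Circle.coe_inv_eq_conj, Circle.coe_inv, inv_zpow, ← zpow_neg] at h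

lemma span_homogeneousElements_star_mem {x : H →L[ℂ] H}
    (hx : x ∈ Submodule.span ℂ (homogeneousElements W)) :
    star x ∈ Submodule.span ℂ (homogeneousElements W) := by
  induction hx using Submodule.span_induction with
  | mem a ha =>
    obtain ⟨d, hd⟩ := ha
    exact Submodule.subset_span ⟨-d, hd.star⟩
  | zero => simp
  | add a b _ _ ha hb => rw [star_add]; exact add_mem ha hb
  | smul c a _ ha => rw [star_smul]; exact Submodule.smul_mem _ _ ha

lemma adjoin_subset_span_homogeneousElements (hWu : ∀ z, W z ∈ unitary (H →L[ℂ] H))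
    {s : Set (H →L[ℂ] H)} (hs : s ⊆ homogeneousElements W) :
    (StarAlgebra.adjoin ℂ s : Set (H →L[ℂ] H)) ⊆ Submodule.span ℂ (homogeneousElements W) := by
  intro x hx
  induction hx using StarAlgebra.adjoin_induction with
  | mem a ha => exact Submodule.subset_span (hs ha)
  | algebraMap r =>
    rw [Algebra.algebraMap_eq_smul_one]
    exact Submodule.smul_mem _ _ (Submodule.subset_span ⟨0, isHomogeneous_one hWu⟩)
  | add a b _ _ ha hb => exact add_mem ha hb
  | mul a b _ _ ha hb => exact span_homogeneousElements_mul_mem hWu ha hb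
  | star a _ ha => exact span_homogeneousElements_star_mem ha

end CircleAction

section Averaging

variable {H : Type*} [NormedAddCommGroup H] [InnerProductSpace ℂ H] [CompleteSpace H]
  {W : Circle → H →L[ℂ] H} {μ : Measure Circle} {E : (H →L[ℂ] H) → (H →L[ℂ] H)}
  (hE : ∀ x ξ, E x ξ = ∫ z, W z (x (star (W z) ξ)) ∂μ)
  (hWu : ∀ z, W z ∈ unitary (H →L[ℂ] H)) (hWinv : ∀ z, star (W z) = W z⁻¹)
  (hWc : ∀ ξ, Continuous fun z => W z ξ)

include hWu hWinv hWc in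
lemma integrable_conj_apply [IsFiniteMeasure μ] (x : H →L[ℂ] H) (ξ : H) :
    Integrable (fun z => W z (x (star (W z) ξ))) μ := by
  have hnorm : ∀ z, ‖W z‖ ≤ 1 := fun z =>
    ContinuousLinearMap.opNorm_le_bound _ zero_le_one fun η => by
      rw [(W z).norm_map_of_mem_unitary (hWu z), one_mul]
  have hcont : Continuous fun z => W z (x (star (W z) ξ)) := by
    refine continuous_apply_apply_of_norm_le hWc hnorm (x.continuous.comp ?_)
    simp only [hWinv]
    exact (hWc ξ).comp continuous_inv
  exact hcont.integrable_of_hasCompactSupport (HasCompactSupport.of_compactSpace _)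

include hE

lemma average_eq_zero_of_isHomogeneous [μ.IsHaarMeasure] {d : ℤ} {x : H →L[ℂ] H}
    (hx : IsHomogeneous W d x) (hd : d ≠ 0) : E x = 0 := by
  obtain ⟨g, hg⟩ := Circle.exists_zpow_eq_neg_one hd
  ext ξ
  have hconj : ∀ z, W z (x (star (W z) ξ)) = ((z : ℂ) ^ d) • x ξ := fun z => by
    change (W z * x * star (W z)) ξ = _
    rw [hx z, smul_apply]
  simp only [hE, hconj, zero_apply]
  refine integral_eq_zero_of_mul_left_eq_neg (g := g) fun z => ?_
  rw [Circle.coe_mul, mul_zpow, hg, neg_one_mul, neg_smul]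

lemma average_smul (c : ℂ) (x : H →L[ℂ] H) : E (c • x) = c • E x := by
  ext ξ
  simp only [hE, smul_apply, map_smul]
  exact integral_smul c _

include hWu in
lemma norm_average_le [IsProbabilityMeasure μ] (x : H →L[ℂ] H) : ‖E x‖ ≤ ‖x‖ := by
  refine ContinuousLinearMap.opNorm_le_bound _ (norm_nonneg x) fun ξ => ?_
  rw [hE]
  refine (norm_integral_le_of_norm_le_const (Filter.Eventually.of_forall fun z => ?_)).trans_eq
    (by rw [probReal_univ, mul_one])
  rw [(W z).norm_map_of_mem_unitary (hWu z)]
  refine (x.le_opNorm _).trans_eq ?_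
  rw [(star (W z)).norm_map_of_mem_unitary (Unitary.star_mem (hWu z))]

include hWu hWinv hWc

lemma average_add [IsFiniteMeasure μ] (x y : H →L[ℂ] H) : E (x + y) = E x + E y := by
  ext ξ
  simp only [hE, add_apply, map_add]
  exact integral_add (integrable_conj_apply hWu hWinv hWc x ξ)
    (integrable_conj_apply hWu hWinv hWc y ξ)

lemma eventually_average_mul_pow_eq_zero [μ.IsHaarMeasure] [IsFiniteMeasure μ]
    {a p : H →L[ℂ] H} (ha : IsHomogeneous W 1 a)
    (hp : p ∈ Submodule.span ℂ (homogeneousElements W)) :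
    ∀ᶠ m : ℕ in Filter.atTop, E (p * a ^ m) = 0 := by
  induction hp using Submodule.span_induction with
  | mem x hx =>
    obtain ⟨d, hd⟩ := hx
    filter_upwards [(tendsto_natCast_atTop_atTop (R := ℤ)).eventually_gt_atTop (-d)] with m hm
    exact average_eq_zero_of_isHomogeneous hE (hd.mul hWu (ha.pow hWu m)) (by omega)
  | zero => exact .of_forall fun _ => by simpa using average_smul hE 0 0
  | add x y _ _ hx hy =>
    filter_upwards [hx, hy] with m hxm hym
    rw [add_mul, average_add hE hWu hWinv hWc, hxm, hym, add_zero]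
  | smul c x _ hx =>
    filter_upwards [hx] with m hxm
    rw [smul_mul_assoc, average_smul hE, hxm, smul_zero]

lemma eventually_norm_average_mul_pow_le [μ.IsHaarMeasure] [IsProbabilityMeasure μ]
    {a v : H →L[ℂ] H} (ha : IsHomogeneous W 1 a)
    (hv : v ∈ closure (Submodule.span ℂ (homogeneousElements W) : Set (H →L[ℂ] H)))
    {ε : ℝ} (hε : 0 < ε) :
    ∀ᶠ m : ℕ in Filter.atTop, ‖E (v * a ^ m)‖ ≤ ε * ‖a ^ m‖ := by
  obtain ⟨p, hp, hvp⟩ := Metric.mem_closure_iff.1 hv ε hε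
  filter_upwards [eventually_average_mul_pow_eq_zero hE hWu hWinv hWc ha hp] with m hm
  have hsplit : v * a ^ m = (v - p) * a ^ m + p * a ^ m := by noncomm_ring
  rw [hsplit, average_add hE hWu hWinv hWc, hm, add_zero]
  calc ‖E ((v - p) * a ^ m)‖ ≤ ‖(v - p) * a ^ m‖ := norm_average_le hE hWu _
    _ ≤ ‖v - p‖ * ‖a ^ m‖ := norm_mul_le _ _
    _ ≤ ε * ‖a ^ m‖ := by
      rw [← dist_eq_norm]
      exact mul_le_mul_of_nonneg_right hvp.le (norm_nonneg _)

end Averaging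

lemma dense_span_e : Dense (Submodule.span ℂ (Set.range fun p : ℕ × ℤ × ℤ => e p.1 p.2.1 p.2.2) :
    Set UqH) := by
  intro ξ
  refine mem_closure_of_tendsto (lp.hasSum_single (by norm_num) ξ)
    (Filter.Eventually.of_forall fun s => Submodule.sum_mem _ fun p _ => ?_)
  have hp : lp.single 2 p (ξ p) = ξ p • e p.1 p.2.1 p.2.2 := by
    rw [e, ← lp.single_smul, smul_eq_mul, mul_one]
  rw [hp]
  exact Submodule.smul_mem _ _ (Submodule.subset_span ⟨p, rfl⟩)

lemma continuousLinearMap_ext_e {M : Type*} [NormedAddCommGroup M] [NormedSpace ℂ M]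
    {T S : UqH →L[ℂ] M} (h : ∀ i j k, T (e i j k) = S (e i j k)) : T = S :=
  ContinuousLinearMap.ext_on dense_span_e (by rintro _ ⟨p, rfl⟩; exact h p.1 p.2.1 p.2.2)

section DiagonalAction

variable {W : Circle → UqH →L[ℂ] UqH}
  (hW : ∀ (z : Circle) (i : ℕ) (j k : ℤ), W z (e i j k) = ((z : ℂ) ^ (i : ℕ)) • e i j k)
include hW

lemma W_apply_apply (z : Circle) (ξ : UqH) (p : ℕ × ℤ × ℤ) : W z ξ p = (z : ℂ) ^ p.1 * ξ p := by
  let ev : UqH →L[ℂ] ℂ := lp.evalCLM ℂ _ 2 p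
  have hcoord : ev.comp (W z) = ((z : ℂ) ^ p.1) • ev := by
    refine continuousLinearMap_ext_e fun i j k => ?_
    rw [ContinuousLinearMap.comp_apply, hW, map_smul, smul_apply]
    by_cases hp : p = (i, j, k)
    · subst hp
      rfl
    · simp [ev, lp.evalCLM, e, hp]
  simpa [ev, lp.evalCLM] using congrArg (fun T : UqH →L[ℂ] ℂ => T ξ) hcoord

lemma W_mul (z z' : Circle) : W z * W z' = W (z * z') :=
  continuousLinearMap_ext_e fun i j k => by
    rw [mul_apply_eq_comp, hW, map_smul, hW, hW, smul_smul, Circle.coe_mul, mul_pow,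
      mul_comm]

lemma W_one : W 1 = 1 :=
  continuousLinearMap_ext_e fun i j k => by simp [hW]

lemma star_W (z : Circle) : star (W z) = W z⁻¹ := by
  rw [ContinuousLinearMap.star_eq_adjoint, eq_comm, ContinuousLinearMap.eq_adjoint_iff]
  intro x y
  rw [lp.inner_eq_tsum, lp.inner_eq_tsum]
  congr 1
  funext p
  simp only [W_apply_apply hW, RCLike.inner_apply, map_mul, map_pow, Circle.coe_inv_eq_conj,
    Complex.conj_conj]
  ring

lemma W_mem_unitary (z : Circle) : W z ∈ unitary (UqH →L[ℂ] UqH) := by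
  rw [Unitary.mem_iff, star_W hW, W_mul hW, W_mul hW, inv_mul_cancel, mul_inv_cancel, W_one hW]
  exact ⟨rfl, rfl⟩

lemma continuous_W_apply (ξ : UqH) : Continuous fun z => W z ξ := by
  refine continuous_apply_of_dense_span (C := 1) (fun z => ?_) dense_span_e ?_ ξ
  · exact ContinuousLinearMap.opNorm_le_bound _ zero_le_one fun η => by
      rw [(W z).norm_map_of_mem_unitary (W_mem_unitary hW z), one_mul]
  · rintro _ ⟨p, rfl⟩
    simp only [hW]
    exact (continuous_subtype_val.pow _).smul continuous_const

lemma isHomogeneous_of_apply_e {x : UqH →L[ℂ] UqH} (c : ℕ → ℤ → ℤ → ℂ) (d : ℕ) (j' k' : ℤ)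
    (hx : ∀ i j k, x (e i j k) = c i j k • e (i + d) (j + j') (k + k')) :
    IsHomogeneous W d x := by
  refine IsHomogeneous.of_mul_eq (W_mem_unitary hW) fun z => continuousLinearMap_ext_e ?_
  intro i j k
  simp only [mul_apply_eq_comp, smul_apply, hx, hW, map_smul, smul_smul, zpow_natCast]
  ring_nf

end DiagonalAction

lemma e_ne_zero (i : ℕ) (j k : ℤ) : e i j k ≠ 0 := fun h => by
  simpa [e] using congrArg (fun ξ : UqH => ξ (i, j, k)) h

lemma pow_apply_e_ne_zero {x : UqH →L[ℂ] UqH} {c : ℕ → ℂ} (hc : ∀ i, c i ≠ 0)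
    (hx : ∀ i j k, x (e i j k) = c i • e (i + 1) j k) (m : ℕ) :
    ∀ i j k, (x ^ m) (e i j k) ≠ 0 := by
  induction m with
  | zero => simpa using e_ne_zero
  | succ m ih =>
    intro i j k
    rw [pow_succ, mul_apply_eq_comp, hx, map_smul]
    exact smul_ne_zero (hc i) (ih _ _ _)

theorem Epsi_no_finite_quasi_basis_general
    (q : ℂ) (hq1 : ‖q‖ < 1)
    (θ : ℝ)
    (A B D : UqH →L[ℂ] UqH)
    (hA : ∀ (i : ℕ) (j k : ℤ),
      A (e i j k) = ((Real.sqrt (1 - ‖q‖ ^ (2 * (i + 1))) : ℝ) : ℂ) • e (i + 1) j k)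
    (hB : ∀ (i : ℕ) (j k : ℤ), B (e i j k) = (q ^ i) • e i (j + 1) k)
    (hD : ∀ (i : ℕ) (j k : ℤ),
      D (e i j k) = Complex.exp (-(2 * (Real.pi : ℂ) * (θ : ℂ) * (j : ℂ)) * Complex.I) • e i j (k + 1))
    (𝒜 : StarSubalgebra ℂ (UqH →L[ℂ] UqH))
    (h𝒜 : 𝒜 = (StarAlgebra.adjoin ℂ ({A, B, D} : Set (UqH →L[ℂ] UqH))).topologicalClosure)
    -- `W z` is the diagonal unitary `e_{i,j,k} ↦ z^i e_{i,j,k}`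
    (W : Circle → (UqH →L[ℂ] UqH))
    (hW : ∀ (z : Circle) (i : ℕ) (j k : ℤ), W z (e i j k) = ((z : ℂ) ^ (i : ℕ)) • e i j k)
    -- `μ` is the normalized Haar (arc-length) probability measure on the circle
    (μ : Measure Circle) (hμ : μ.IsHaarMeasure) (hμ1 : IsProbabilityMeasure μ)
    -- `E_ψ` is the averaging `x ↦ ∫ W z x W z* dμ(z)` (Bochner integral pointwise)
    (Eψ : (UqH →L[ℂ] UqH) → (UqH →L[ℂ] UqH))
    (hEψ : ∀ (x : UqH →L[ℂ] UqH) (ξ : UqH),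
      Eψ x ξ = ∫ z : Circle, W z (x ((star (W z)) ξ)) ∂μ) :
    ¬ ∃ (n : ℕ) (u v : Fin n → (UqH →L[ℂ] UqH)),
        (∀ i, u i ∈ 𝒜) ∧ (∀ i, v i ∈ 𝒜) ∧
        ∀ x ∈ 𝒜, (x = ∑ i, u i * Eψ (v i * x)) ∧ (x = ∑ i, Eψ (x * u i) * v i) := by
  rintro ⟨n, u, v, -, hv, hquasi⟩
  have hA1 : IsHomogeneous W 1 A :=
    isHomogeneous_of_apply_e hW (fun i _ _ => Real.sqrt (1 - ‖q‖ ^ (2 * (i + 1)))) 1 0 0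
      (by simpa using hA)
  have hgen : {A, B, D} ⊆ homogeneousElements W := by
    rintro x (rfl | rfl | rfl)
    · exact ⟨1, hA1⟩
    · exact ⟨0, isHomogeneous_of_apply_e hW _ 0 1 0 (by simpa using hB)⟩
    · exact ⟨0, isHomogeneous_of_apply_e hW _ 0 0 1 (by simpa using hD)⟩
  have h𝒜span : (𝒜 : Set (UqH →L[ℂ] UqH)) ⊆
      closure (Submodule.span ℂ (homogeneousElements W) : Set (UqH →L[ℂ] UqH)) := by
    rw [h𝒜, StarSubalgebra.topologicalClosure_coe]
    exact closure_mono (adjoin_subset_span_homogeneousElements (W_mem_unitary hW) hgen)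
  have hε : 0 < (∑ i, ‖u i‖ + 1)⁻¹ := by positivity
  obtain ⟨m, hm⟩ := (Filter.eventually_all.2 fun i => eventually_norm_average_mul_pow_le hEψ
    (W_mem_unitary hW) (star_W hW) (continuous_W_apply hW) hA1 (h𝒜span (hv i)) hε).exists
  have hAm : A ^ m ∈ 𝒜 := pow_mem (h𝒜 ▸ StarSubalgebra.le_topologicalClosure _
    (StarAlgebra.subset_adjoin ℂ _ (Set.mem_insert A _))) m
  have hweights : ∀ i : ℕ, ((Real.sqrt (1 - ‖q‖ ^ (2 * (i + 1))) : ℝ) : ℂ) ≠ 0 := fun i => by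
    have : ‖q‖ ^ (2 * (i + 1)) < 1 := pow_lt_one₀ (norm_nonneg q) hq1 (by omega)
    exact Complex.ofReal_ne_zero.2 (Real.sqrt_pos.2 (by linarith)).ne'
  refine pow_apply_e_ne_zero hweights hA m 0 0 0 ?_
  rw [eq_zero_of_eq_sum_mul_of_norm_le (hquasi _ hAm).1 hm (by
    rw [inv_mul_lt_one₀ (by positivity)]; linarith), zero_apply]

/-- the conditional expectation `E_ψ : C(U_q(2)) → C(U_q(2)/_ψ 𝕋)` admits no
finite quasi-basis, i.e. it is not of index-finite type (infinite Watatani index). -/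
theorem Epsi_no_finite_quasi_basis
    (q : ℂ) (hq0 : 0 < ‖q‖) (hq1 : ‖q‖ < 1)
    (θ : ℝ) (hθ : θ = Complex.arg q / Real.pi)
    (A B D : UqH →L[ℂ] UqH)
    (hA : ∀ (i : ℕ) (j k : ℤ),
      A (e i j k) = ((Real.sqrt (1 - ‖q‖ ^ (2 * (i + 1))) : ℝ) : ℂ) • e (i + 1) j k)
    (hB : ∀ (i : ℕ) (j k : ℤ), B (e i j k) = (q ^ i) • e i (j + 1) k)
    (hD : ∀ (i : ℕ) (j k : ℤ),
      D (e i j k) = Complex.exp (-(2 * (Real.pi : ℂ) * (θ : ℂ) * (j : ℂ)) * Complex.I) • e i j (k + 1))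
    (𝒜 : StarSubalgebra ℂ (UqH →L[ℂ] UqH))
    (h𝒜 : 𝒜 = (StarAlgebra.adjoin ℂ ({A, B, D} : Set (UqH →L[ℂ] UqH))).topologicalClosure)
    -- `W z` is the diagonal unitary `e_{i,j,k} ↦ z^i e_{i,j,k}`
    (W : Circle → (UqH →L[ℂ] UqH))
    (hW : ∀ (z : Circle) (i : ℕ) (j k : ℤ), W z (e i j k) = ((z : ℂ) ^ (i : ℕ)) • e i j k)
    -- `μ` is the normalized Haar (arc-length) probability measure on the circle
    (μ : Measure Circle) (hμ : μ.IsHaarMeasure) (hμ1 : IsProbabilityMeasure μ)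
    -- `E_ψ` is the averaging `x ↦ ∫ W z x W z* dμ(z)` (Bochner integral pointwise)
    (Eψ : (UqH →L[ℂ] UqH) → (UqH →L[ℂ] UqH))
    (hEψ : ∀ (x : UqH →L[ℂ] UqH) (ξ : UqH),
      Eψ x ξ = ∫ z : Circle, W z (x ((star (W z)) ξ)) ∂μ) :
    ¬ ∃ (n : ℕ) (u v : Fin n → (UqH →L[ℂ] UqH)),
        (∀ i, u i ∈ 𝒜) ∧ (∀ i, v i ∈ 𝒜) ∧
        ∀ x ∈ 𝒜, (x = ∑ i, u i * Eψ (v i * x)) ∧ (x = ∑ i, Eψ (x * u i) * v i) :=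
  Epsi_no_finite_quasi_basis_general q hq1 θ A B D hA hB hD 𝒜 h𝒜 W hW μ hμ hμ1 Eψ hEψ
end
end

section
/- For every integer n ≥ 1, the operator norm satisfies ‖Σ_{j=0}^{n−1} D^{j}‖² ≥ (2n² + 1)/3. (This is the key estimate showing that the conditional expectation E_φ onto C(U_q(2)/_φ 𝕋) has infinite Watatani index.) -/
/-!
On the slice `i = j = 0` the operator `D` is the bilateral shift `e_{0,0,k} ↦ e_{0,0,k+1}`, so it
suffices to test `S = ∑_{j<n} D^j` on the window `v = ∑_{0 ≤ k < n} e_{0,0,k}`. Then `‖v‖² = n`,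
and `⟪D^j v, D^{j'} v⟫` counts the overlap `n - |j - j'|` of two shifted windows, whence
`‖S v‖² = ∑_{j,j'<n} (n - |j - j'|) = n (2n² + 1) / 3`.
-/

open scoped InnerProductSpace
noncomputable section

open Finset

theorem Orthonormal.inner_sum_sum_eq_card_inter {𝕜 E ι : Type*} [RCLike 𝕜]
    [NormedAddCommGroup E] [InnerProductSpace 𝕜 E] [DecidableEq ι] {b : ι → E}
    (hb : Orthonormal 𝕜 b) (s t : Finset ι) :
    ⟪∑ i ∈ s, b i, ∑ i ∈ t, b i⟫_𝕜 = #(s ∩ t) := by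
  simp [sum_inner, inner_sum, orthonormal_iff_ite.mp hb, inter_comm]

theorem Int.card_Ico_inter_Ico_add (a b : ℤ) (n : ℕ) (h : |a - b| ≤ n) :
    (#(Ico a (a + n) ∩ Ico b (b + n)) : ℤ) = n - |a - b| := by
  rw [abs_le] at h
  rw [Ico_inter_Ico, Int.card_Ico_of_le, min_add_add_right, abs_eq_max_neg] <;> omega

theorem sum_range_sum_range_abs_sub (n : ℕ) :
    3 * ∑ i ∈ range n, ∑ j ∈ range n, |(i : ℤ) - j| = n ^ 3 - n := by
  induction n with
  | zero => simp
  | succ n ih =>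
    have gauss : 2 * ∑ i ∈ range n, (i : ℤ) = n * (n - 1) := by
      clear ih
      induction n with
      | zero => simp
      | succ n ih => rw [sum_range_succ, mul_add, ih]; push_cast; ring
    have last_col : ∀ i ∈ range n, |(n : ℤ) - i| = n - i := fun i hi =>
      abs_of_nonneg (by simp at hi; omega)
    have last_row : ∀ i ∈ range n, |(i : ℤ) - n| = n - i := fun i hi => by
      rw [abs_sub_comm, last_col i hi]
    simp only [sum_range_succ, sub_self, abs_zero, add_zero, sum_add_distrib,
      sum_congr rfl last_col, sum_congr rfl last_row, sum_sub_distrib, sum_const, card_range,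
      nsmul_eq_mul]
    push_cast
    linear_combination ih - 3 * gauss

theorem sum_range_sum_range_sub_abs_sub (n : ℕ) :
    3 * ∑ i ∈ range n, ∑ j ∈ range n, ((n : ℤ) - |(i : ℤ) - j|) = n * (2 * n ^ 2 + 1) := by
  simp only [sum_sub_distrib, sum_const, card_range, nsmul_eq_mul, mul_sub,
    sum_range_sum_range_abs_sub]
  ring

theorem ContinuousLinearMap.pow_apply_of_apply_eq_add_one {R M : Type*} [Semiring R]
    [TopologicalSpace M] [AddCommMonoid M] [Module R M] {b : ℤ → M} {T : M →L[R] M}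
    (hT : ∀ k, T (b k) = b (k + 1)) (j : ℕ) (k : ℤ) : (T ^ j) (b k) = b (k + j) := by
  induction j generalizing k with
  | zero => simp
  | succ j ih => rw [pow_succ', mul_apply_eq_comp, ih, hT]; push_cast; ring_nf

theorem norm_sum_pow_sq_ge_of_orthonormal_shift {𝕜 E : Type*} [RCLike 𝕜]
    [NormedAddCommGroup E] [InnerProductSpace 𝕜 E] {b : ℤ → E} {T : E →L[𝕜] E}
    (hb : Orthonormal 𝕜 b) (hT : ∀ k, T (b k) = b (k + 1)) {n : ℕ} (hn : 0 < n) :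
    (2 * (n : ℝ) ^ 2 + 1) / 3 ≤ ‖∑ j ∈ range n, T ^ j‖ ^ 2 := by
  set S := ∑ j ∈ range n, T ^ j
  set v := ∑ k ∈ Ico (0 : ℤ) n, b k
  have hTv (j : ℕ) : (T ^ j) v = ∑ k ∈ Ico (j : ℤ) (j + n), b k := by
    simp [v, map_sum, T.pow_apply_of_apply_eq_add_one hT, sum_Ico_add', add_comm (n : ℤ)]
  have hv : ‖v‖ ^ 2 = n := by
    rw [@norm_sq_eq_re_inner 𝕜, hb.inner_sum_sum_eq_card_inter]
    simp
  have hSv : 3 * ‖S v‖ ^ 2 = n * (2 * n ^ 2 + 1) := by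
    have overlap : ∀ i ∈ range n, ∀ j ∈ range n,
        (#(Ico (i : ℤ) (i + n) ∩ Ico (j : ℤ) (j + n)) : ℤ) = n - |(i : ℤ) - j| :=
      fun i hi j hj => Int.card_Ico_inter_Ico_add _ _ _ (by simp at hi hj; rw [abs_le]; omega)
    have count := sum_range_sum_range_sub_abs_sub n
    rw [← sum_congr rfl fun i hi => sum_congr rfl (overlap i hi)] at count
    rw [@norm_sq_eq_re_inner 𝕜, _root_.sum_apply, sum_inner]
    simp_rw [inner_sum, hTv, hb.inner_sum_sum_eq_card_inter]
    simp only [← Nat.cast_sum, RCLike.natCast_re]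
    exact_mod_cast count
  have hSv_le : ‖S v‖ ^ 2 ≤ ‖S‖ ^ 2 * ‖v‖ ^ 2 := by
    rw [← mul_pow]
    exact pow_le_pow_left₀ (norm_nonneg _) (S.le_opNorm v) 2
  have hn' : (0 : ℝ) < n := by exact_mod_cast hn
  nlinarith

theorem orthonormal_e (i : ℕ) (j : ℤ) : Orthonormal ℂ (e i j) := by
  have h : Orthonormal ℂ (fun p : ℕ × ℤ × ℤ => (lp.single 2 p (1 : ℂ) : UqH)) := by
    convert (default : HilbertBasis (ℕ × ℤ × ℤ) ℂ UqH).orthonormal with p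
    exact (default : HilbertBasis (ℕ × ℤ × ℤ) ℂ UqH).repr_symm_single p
  exact h.comp _ fun a b h => by simpa using h

theorem norm_sq_sum_D_pow_ge_general
    (θ : ℝ)
    (D : UqH →L[ℂ] UqH)
    (hD : ∀ (i : ℕ) (j k : ℤ),
      D (e i j k) = Complex.exp (-(2 * (Real.pi : ℂ) * (θ : ℂ) * (j : ℂ)) * Complex.I) • e i j (k + 1)) :
    ∀ n : ℕ, 1 ≤ n →
      ((2 * (n : ℝ) ^ 2 + 1) / 3 : ℝ) ≤ ‖∑ j ∈ Finset.range n, D ^ j‖ ^ 2 := by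
  intro n hn
  have hshift (k : ℤ) : D (e 0 0 k) = e 0 0 (k + 1) := by simp [hD]
  exact norm_sum_pow_sq_ge_of_orthonormal_shift (orthonormal_e 0 0) hshift hn

/-- for every `n ≥ 1`, `‖∑_{j=0}^{n−1} D^j‖² ≥ (2n² + 1)/3`, the key estimate
showing that the conditional expectation `E_φ` has infinite Watatani index. -/
theorem norm_sq_sum_D_pow_ge
    (q : ℂ) (hq0 : 0 < ‖q‖) (hq1 : ‖q‖ < 1)
    (θ : ℝ) (hθ : θ = Complex.arg q / Real.pi)
    (D : UqH →L[ℂ] UqH)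
    (hD : ∀ (i : ℕ) (j k : ℤ),
      D (e i j k) = Complex.exp (-(2 * (Real.pi : ℂ) * (θ : ℂ) * (j : ℂ)) * Complex.I) • e i j (k + 1)) :
    ∀ n : ℕ, 1 ≤ n →
      ((2 * (n : ℝ) ^ 2 + 1) / 3 : ℝ) ≤ ‖∑ j ∈ Finset.range n, D ^ j‖ ^ 2 :=
  norm_sq_sum_D_pow_ge_general θ D hD
end
end

section
/- For every n ∈ ℕ, the operator norm satisfies ‖Σ_{j=0}^{n} B^{j}‖² ≥ (2n² + 4n + 3)/3. (This is the key estimate showing that the conditional expectation E_ψ onto C(U_q(2)/_ψ 𝕋) has infinite Watatani index.) -/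
open scoped InnerProductSpace
noncomputable section

/-!
On the vectors `e_{0,m,0}` the operator `B` acts as the shift `m ↦ m + 1`. Testing
`S = ∑_{j ≤ n} B^j` on `v = ∑_{m ≤ n} e_{0,m,0}` gives `S v = ∑_{j, m ≤ n} e_{0,j+m,0}`, so by
orthonormality `‖S v‖²` is the number of quadruples in `{0, …, n}⁴` with `a + b = c + d`, i.e. the
additive energy of `{0, …, n}`, which equals `(n + 1)(2n² + 4n + 3)/3`; since `‖v‖² = n + 1`,
the bound follows from `‖S v‖ ≤ ‖S‖ ‖v‖`.
-/

open Finset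
open scoped Combinatorics.Additive

section Orthonormal

variable {𝕜 E : Type*} [RCLike 𝕜] [NormedAddCommGroup E] [InnerProductSpace 𝕜 E]

theorem Orthonormal.norm_sum_comp_sq {ι α : Type*} [DecidableEq ι] {f : ι → E}
    (hf : Orthonormal 𝕜 f) (s : Finset α) (g : α → ι) :
    ‖∑ x ∈ s, f (g x)‖ ^ 2 = #{p ∈ s ×ˢ s | g p.1 = g p.2} := by
  rw [@norm_sq_eq_re_inner 𝕜, sum_inner, card_filter, sum_product]
  simp_rw [inner_sum, orthonormal_iff_ite.mp hf]
  simp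

theorem Orthonormal.norm_sum_sq {ι : Type*} {f : ι → E} (hf : Orthonormal 𝕜 f) (s : Finset ι) :
    ‖∑ i ∈ s, f i‖ ^ 2 = #s := by
  classical
  rw [← diag_card, diag_eq_filter]
  exact hf.norm_sum_comp_sq s id

theorem Orthonormal.norm_sum_sum_add_sq {α : Type*} [Add α] [DecidableEq α] {f : α → E}
    (hf : Orthonormal 𝕜 f) (s t : Finset α) :
    ‖∑ x ∈ s, ∑ y ∈ t, f (x + y)‖ ^ 2 = E[s, t] := by
  rw [← sum_product' s t fun x y => f (x + y), hf.norm_sum_comp_sq, addEnergy_eq_card_filter]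

end Orthonormal

theorem Finset.addEnergy_eq_sum_card_filter {α : Type*} [Add α] [DecidableEq α]
    (s t : Finset α) :
    E[s, t] = ∑ a ∈ s ×ˢ s, #{b ∈ t ×ˢ t | a.1 + b.1 = a.2 + b.2} := by
  simp_rw [addEnergy, card_filter, sum_product]

theorem card_filter_add_eq_add_range (n a c : ℕ) :
    #{p ∈ range (n + 1) ×ˢ range (n + 1) | a + p.1 = c + p.2} = n + 1 - a.dist c := by
  -- The solutions are `(m + (c - a), m + (a - c))`: truncated subtraction kills one shift.
  have hinj : Function.Injective fun m => (m + (c - a), m + (a - c)) := fun x y h => by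
    simpa using congr_arg Prod.fst h
  have hsol : {p ∈ range (n + 1) ×ˢ range (n + 1) | a + p.1 = c + p.2} =
      (range (n + 1 - a.dist c)).image fun m => (m + (c - a), m + (a - c)) := by
    ext ⟨b, d⟩
    simp only [mem_filter, mem_product, mem_range, mem_image, Prod.mk.injEq, Nat.dist]
    constructor
    · rintro ⟨⟨hb, hd⟩, h⟩
      exact ⟨b - (c - a), by omega, by omega, by omega⟩
    · rintro ⟨m, hm, rfl, rfl⟩
      omega
  rw [hsol, card_image_of_injective _ hinj, card_range]

theorem three_mul_sum_sum_sub_dist (n : ℕ) :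
    3 * ∑ a ∈ range (n + 1), ∑ c ∈ range (n + 1), (n + 1 - a.dist c) =
      (n + 1) * (2 * n ^ 2 + 4 * n + 3) := by
  induction n with
  | zero => simp
  | succ n ih =>
    have hgauss : (∑ a ∈ range (n + 1), (a + 1)) * 2 = (n + 1) * (n + 2) := by
      simpa [sum_range_succ', mul_comm] using sum_range_id_mul_two (n + 2)
    have hrow : ∀ a ∈ range (n + 1), ∑ c ∈ range (n + 2), (n + 2 - a.dist c) =
        ∑ c ∈ range (n + 1), (n + 1 - a.dist c) + (n + 1) + (a + 1) := by
      intro a ha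
      have hinner : ∀ c ∈ range (n + 1), n + 2 - a.dist c = n + 1 - a.dist c + 1 := by
        intro c hc
        simp only [mem_range, Nat.dist] at ha hc ⊢
        omega
      have hend : n + 2 - a.dist (n + 1) = a + 1 := by
        simp only [mem_range, Nat.dist] at ha ⊢
        omega
      simp [sum_range_succ, sum_congr rfl hinner, hend, sum_add_distrib]
    have hlast : ∑ c ∈ range (n + 2), (n + 2 - (n + 1).dist c) =
        ∑ c ∈ range (n + 1), (c + 1) + (n + 2) := by
      have hinner : ∀ c ∈ range (n + 1), n + 2 - (n + 1).dist c = c + 1 := by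
        intro c hc
        simp only [mem_range, Nat.dist] at hc ⊢
        omega
      simp [sum_range_succ, sum_congr rfl hinner]
    rw [sum_range_succ, sum_congr rfl hrow, hlast, sum_add_distrib, sum_add_distrib, sum_const,
      card_range, smul_eq_mul]
    nlinarith [ih, hgauss]

theorem three_mul_addEnergy_range (n : ℕ) :
    3 * E[range (n + 1)] = (n + 1) * (2 * n ^ 2 + 4 * n + 3) := by
  rw [addEnergy_eq_sum_card_filter, sum_product]
  simp_rw [card_filter_add_eq_add_range]
  exact three_mul_sum_sum_sub_dist n

theorem Function.iterate_apply_of_apply_eq_succ {α : Type*} {T : α → α} {f : ℕ → α}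
    (hT : ∀ m, T (f m) = f (m + 1)) (j m : ℕ) : T^[j] (f m) = f (m + j) := by
  induction j with
  | zero => rfl
  | succ j ih => rw [Function.iterate_succ_apply', ih, hT, add_assoc]

theorem orthonormal_e_s10 : Orthonormal ℂ fun p : ℕ × ℤ × ℤ => e p.1 p.2.1 p.2.2 := by
  classical
  rw [orthonormal_iff_ite]
  intro p p'
  simp [e, lp.inner_single_left, lp.single_apply, Pi.single_apply]

theorem norm_sq_sum_B_pow_ge_general
    (q : ℂ)
    (B : UqH →L[ℂ] UqH)
    (hB : ∀ (i : ℕ) (j k : ℤ), B (e i j k) = (q ^ i) • e i (j + 1) k) :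
    ∀ n : ℕ,
      ((2 * (n : ℝ) ^ 2 + 4 * (n : ℝ) + 3) / 3 : ℝ) ≤ ‖∑ j ∈ Finset.range (n + 1), B ^ j‖ ^ 2 := by
  intro n
  set f : ℕ → UqH := fun m => e 0 m 0
  have hf : Orthonormal ℂ f :=
    orthonormal_e_s10.comp (fun m : ℕ => ((0 : ℕ), (m : ℤ), (0 : ℤ))) fun a b h => by simpa using h
  have hshift : ∀ m, B (f m) = f (m + 1) := fun m => by simpa [f] using hB 0 m 0
  set S := ∑ j ∈ range (n + 1), B ^ j
  set v := ∑ m ∈ range (n + 1), f m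
  have hv : ‖v‖ ^ 2 = n + 1 := by
    rw [hf.norm_sum_sq, card_range]
    push_cast
    ring
  have hSv : ‖S v‖ ^ 2 = E[range (n + 1)] := by
    rw [← hf.norm_sum_sum_add_sq, _root_.sum_apply, sum_comm]
    simp_rw [v, map_sum, pow_apply_eq_iterate, Function.iterate_apply_of_apply_eq_succ hshift]
  have hE : (3 * E[range (n + 1)] : ℝ) = (n + 1) * (2 * n ^ 2 + 4 * n + 3) := by
    exact_mod_cast three_mul_addEnergy_range n
  calc ((2 * (n : ℝ) ^ 2 + 4 * n + 3) / 3 : ℝ) = ‖S v‖ ^ 2 / ‖v‖ ^ 2 := by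
        rw [hSv, hv]
        field_simp
        linarith
    _ = (‖S v‖ / ‖v‖) ^ 2 := (div_pow _ _ 2).symm
    _ ≤ ‖S‖ ^ 2 := by gcongr; exact S.ratio_le_opNorm v

/-- for every `n ∈ ℕ`, `‖∑_{j=0}^{n} B^j‖² ≥ (2n² + 4n + 3)/3`, the key
estimate showing that the conditional expectation `E_ψ` has infinite Watatani index. -/
theorem norm_sq_sum_B_pow_ge
    (q : ℂ) (hq0 : 0 < ‖q‖) (hq1 : ‖q‖ < 1)
    (B : UqH →L[ℂ] UqH)
    (hB : ∀ (i : ℕ) (j k : ℤ), B (e i j k) = (q ^ i) • e i (j + 1) k) :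
    ∀ n : ℕ,
      ((2 * (n : ℝ) ^ 2 + 4 * (n : ℝ) + 3) / 3 : ℝ) ≤ ‖∑ j ∈ Finset.range (n + 1), B ^ j‖ ^ 2 :=
  norm_sq_sum_B_pow_ge_general q B hB
end
end

section
/- For every x in the star-subalgebra 𝒪 of B(H) generated by A, B, D and the identity, there exist bounded operators S and S′ on H such that for all (i,j,k), (i′,j′,k′) ∈ ℕ×ℤ×ℤ one has ⟨e_{i′,j′,k′}, S e_{i,j,k}⟩ = (d(i′,j′,k′) − d(i,j,k))·⟨e_{i′,j′,k′}, x e_{i,j,k}⟩ and ⟨e_{i′,j′,k′}, S′ e_{i,j,k}⟩ = (conj(d(i′,j′,k′)) − conj(d(i,j,k)))·⟨e_{i′,j′,k′}, x e_{i,j,k}⟩. (That is, the commutators [T, x] and [T*, x] with the unbounded diagonal operator T : e_{i,j,k} ↦ d(i,j,k)·e_{i,j,k} extend to bounded operators on H.) -/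
open scoped InnerProductSpace
noncomputable section

/-- The eigenvalue function `d(i,j,k) = ±i + j + √−1·k` (sign `+` if `j ≥ 0`, `−` if `j < 0`)
of the diagonal operator `T`. -/
def dEig (i : ℕ) (j k : ℤ) : ℂ :=
  if 0 ≤ j then (i : ℂ) + (j : ℂ) + Complex.I * (k : ℂ)
  else -(i : ℂ) + (j : ℂ) + Complex.I * (k : ℂ)

/-!
The operators `x` for which both `[T, x]` and `[T*, x]` extend boundedly form a star subalgebra:
the Leibniz rule handles products, and taking adjoints exchanges the roles of `T` and `T*`. So it
suffices to treat the generators. Each of `A`, `B`, `D` is a weighted shift `e_m ↦ a_m e_{σ m}`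
along one coordinate, and its commutator with `T` is the weighted shift with weights
`(d(σ m) - d(m)) a_m`. The jump `d(σ m) - d(m)` is `±1` for `A` and `√−1` for `D`; for `B` it is
`2i + 1` when `j = -1`, and this growth is absorbed by the factor `q^i`.
-/

open scoped lp ComplexConjugate

namespace lp

variable {𝕜 ι : Type*} [RCLike 𝕜]

def diagCLM (f : ι → 𝕜) {C : ℝ} (hf : ∀ i, ‖f i‖ ≤ C) : ℓ²(ι, 𝕜) →L[𝕜] ℓ²(ι, 𝕜) :=
  lp.mapCLM 2 (fun i => f i • ContinuousLinearMap.id 𝕜 𝕜) (le_max_right C 0) fun i =>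
    (norm_smul_le _ _).trans <| (mul_le_of_le_one_right (norm_nonneg _)
      ContinuousLinearMap.norm_id_le).trans <| (hf i).trans (le_max_left C 0)

lemma diagCLM_apply (f : ι → 𝕜) {C : ℝ} (hf : ∀ i, ‖f i‖ ≤ C) (v : ℓ²(ι, 𝕜)) (i : ι) :
    diagCLM f hf v i = f i * v i := by
  simp [diagCLM]

variable [DecidableEq ι]

lemma diagCLM_single (f : ι → 𝕜) {C : ℝ} (hf : ∀ i, ‖f i‖ ≤ C) (i : ι) (a : 𝕜) :
    diagCLM f hf (lp.single 2 i a) = lp.single 2 i (f i * a) := by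
  ext i'
  by_cases h : i' = i
  · subst h; simp [diagCLM_apply]
  · simp [diagCLM_apply, h]

lemma orthonormal_single : Orthonormal 𝕜 (fun i : ι => lp.single 2 i (1 : 𝕜)) := by
  rw [orthonormal_iff_ite]
  intro i j
  rw [inner_single_left]
  by_cases h : i = j
  · subst h; simp
  · simp [h]

lemma inner_single_one_left (i : ι) (v : ℓ²(ι, 𝕜)) : ⟪lp.single 2 i (1 : 𝕜), v⟫_𝕜 = v i := by
  simp [inner_single_left]

lemma hasSum_mul_apply_single (T : ℓ²(ι, 𝕜) →L[𝕜] ℓ²(ι, 𝕜)) (v : ℓ²(ι, 𝕜)) (i' : ι) :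
    HasSum (fun i => v i * T (lp.single 2 i 1) i') (T v i') := by
  have h := (lp.hasSum_single ENNReal.ofNat_ne_top v).mapL ((innerSL 𝕜 (lp.single 2 i' 1)).comp T)
  have hsingle : ∀ i, lp.single 2 i (v i) = v i • (lp.single 2 i 1 : ℓ²(ι, 𝕜)) := fun i => by
    rw [← lp.single_smul, smul_eq_mul, mul_one]
  simpa only [ContinuousLinearMap.comp_apply, innerSL_apply_apply, inner_single_one_left, hsingle,
    map_smul, lp.coeFn_smul, Pi.smul_apply, smul_eq_mul] using h

lemma adjoint_apply_single (T : ℓ²(ι, 𝕜) →L[𝕜] ℓ²(ι, 𝕜)) (i i' : ι) :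
    T.adjoint (lp.single 2 i 1) i' = conj (T (lp.single 2 i' 1) i) := by
  rw [← inner_single_one_left, ContinuousLinearMap.adjoint_inner_right, ← inner_conj_symm,
    inner_single_one_left]

end lp

section BoundedCommutator

variable {𝕜 ι : Type*} [RCLike 𝕜] [DecidableEq ι]

/-- `S` has the matrix of the commutator `[T, x]`, where `T` is the (possibly unbounded) diagonal
operator `lp.single 2 i 1 ↦ c i • lp.single 2 i 1`. -/
def IsCommutatorExtension (c : ι → 𝕜) (x S : ℓ²(ι, 𝕜) →L[𝕜] ℓ²(ι, 𝕜)) : Prop :=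
  ∀ i i', S (lp.single 2 i 1) i' = (c i' - c i) * x (lp.single 2 i 1) i'

namespace IsCommutatorExtension

variable {c : ι → 𝕜} {x y S T : ℓ²(ι, 𝕜) →L[𝕜] ℓ²(ι, 𝕜)}

lemma algebraMap (c : ι → 𝕜) (r : 𝕜) :
    IsCommutatorExtension c (algebraMap 𝕜 (ℓ²(ι, 𝕜) →L[𝕜] ℓ²(ι, 𝕜)) r) 0 := by
  intro i i'
  by_cases h : i' = i
  · subst h; simp
  · simp [Algebra.algebraMap_eq_smul_one, h]

lemma add (hx : IsCommutatorExtension c x S) (hy : IsCommutatorExtension c y T) :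
    IsCommutatorExtension c (x + y) (S + T) := by
  intro i i'
  simp only [add_apply, lp.coeFn_add, Pi.add_apply, hx i i', hy i i']
  ring

lemma mul (hx : IsCommutatorExtension c x S) (hy : IsCommutatorExtension c y T) :
    IsCommutatorExtension c (x * y) (S ∘L y + x ∘L T) := by
  intro i i'
  have hsum := (lp.hasSum_mul_apply_single S (y (lp.single 2 i 1)) i').add
    (lp.hasSum_mul_apply_single x (T (lp.single 2 i 1)) i')
  have hprod := (lp.hasSum_mul_apply_single x (y (lp.single 2 i 1)) i').mul_left (c i' - c i)
  refine hsum.unique (hprod.congr_fun fun n => ?_)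
  rw [hx n i', hy i n]
  ring

lemma star (hx : IsCommutatorExtension (fun i => conj (c i)) x S) :
    IsCommutatorExtension c (star x) (-S.adjoint) := by
  intro i i'
  rw [neg_apply, lp.coeFn_neg, Pi.neg_apply, lp.adjoint_apply_single,
    ContinuousLinearMap.star_eq_adjoint, lp.adjoint_apply_single, hx i' i]
  simp only [map_mul, map_sub, RCLike.conj_conj]
  ring

end IsCommutatorExtension

def boundedCommutatorAlgebra (c : ι → 𝕜) : StarSubalgebra 𝕜 (ℓ²(ι, 𝕜) →L[𝕜] ℓ²(ι, 𝕜)) where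
  carrier := {x | (∃ S, IsCommutatorExtension c x S) ∧
    ∃ S, IsCommutatorExtension (fun i => conj (c i)) x S}
  mul_mem' := fun ⟨⟨S, hS⟩, S', hS'⟩ ⟨⟨T, hT⟩, T', hT'⟩ => ⟨⟨_, hS.mul hT⟩, _, hS'.mul hT'⟩
  add_mem' := fun ⟨⟨S, hS⟩, S', hS'⟩ ⟨⟨T, hT⟩, T', hT'⟩ => ⟨⟨_, hS.add hT⟩, _, hS'.add hT'⟩
  algebraMap_mem' r := ⟨⟨_, .algebraMap c r⟩, _, .algebraMap _ r⟩
  star_mem' := fun ⟨⟨S, hS⟩, S', hS'⟩ =>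
    ⟨⟨_, hS'.star⟩, _, IsCommutatorExtension.star (by simpa only [RCLike.conj_conj] using hS)⟩

end BoundedCommutator

section WeightedShift

variable {𝕜 ι : Type*} [RCLike 𝕜] [DecidableEq ι] {c : ι → 𝕜}
  {x : ℓ²(ι, 𝕜) →L[𝕜] ℓ²(ι, 𝕜)} {σ : ι → ι} {a : ι → 𝕜} {C : ℝ}

/-- The extension is `R ∘ diag((c ∘ σ - c) * a)`, with `R` the isometry `e_i ↦ e_{σ i}`. -/
lemma exists_isCommutatorExtension_of_apply_single (hσ : σ.Injective)
    (hx : ∀ i, x (lp.single 2 i 1) = a i • lp.single 2 (σ i) 1)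
    (hC : ∀ i, ‖(c (σ i) - c i) * a i‖ ≤ C) :
    ∃ S, IsCommutatorExtension c x S := by
  have hR := (lp.orthonormal_single (𝕜 := 𝕜)).comp σ hσ |>.orthogonalFamily
  refine ⟨hR.linearIsometry.toContinuousLinearMap ∘L lp.diagCLM _ hC, fun i i' => ?_⟩
  rw [ContinuousLinearMap.comp_apply, lp.diagCLM_single, LinearIsometry.coe_toContinuousLinearMap,
    hR.linearIsometry_apply_single, LinearIsometry.toSpanSingleton_apply, hx]
  by_cases h : i' = σ i
  · subst h; simp
  · simp [h]

lemma mem_boundedCommutatorAlgebra_of_apply_single (hσ : σ.Injective)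
    (hx : ∀ i, x (lp.single 2 i 1) = a i • lp.single 2 (σ i) 1)
    (hC : ∀ i, ‖(c (σ i) - c i) * a i‖ ≤ C) :
    x ∈ boundedCommutatorAlgebra c :=
  ⟨exists_isCommutatorExtension_of_apply_single hσ hx hC,
    exists_isCommutatorExtension_of_apply_single hσ hx fun i => by
      simpa only [← map_sub, norm_mul, RCLike.norm_conj] using hC i⟩

end WeightedShift

def dEig₃ (m : ℕ × ℤ × ℤ) : ℂ := dEig m.1 m.2.1 m.2.2

lemma dEig_succ_fst_sub (i : ℕ) (j k : ℤ) :
    dEig (i + 1) j k - dEig i j k = if 0 ≤ j then 1 else -1 := by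
  unfold dEig; split_ifs <;> push_cast <;> ring

lemma dEig_succ_thd_sub (i : ℕ) (j k : ℤ) : dEig i j (k + 1) - dEig i j k = Complex.I := by
  unfold dEig; split_ifs <;> push_cast <;> ring

lemma norm_dEig_succ_snd_sub_le (i : ℕ) (j k : ℤ) :
    ‖dEig i (j + 1) k - dEig i j k‖ ≤ 2 * i + 1 := by
  have hi : (0 : ℝ) ≤ i := i.cast_nonneg
  unfold dEig
  split_ifs with h₁ h₀ h₀
  · rw [show _ - _ = (1 : ℂ) by push_cast; ring, norm_one]; linarith
  · rw [show _ - _ = ((2 * i + 1 : ℕ) : ℂ) by push_cast; ring, Complex.norm_natCast]; push_cast; rfl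
  · omega
  · rw [show _ - _ = (1 : ℂ) by push_cast; ring, norm_one]; linarith

lemma bddAbove_range_two_mul_add_one_mul_pow {r : ℝ} (hr₀ : 0 ≤ r) (hr₁ : r < 1) :
    BddAbove (Set.range fun i : ℕ => (2 * i + 1) * r ^ i) := by
  have h := ((tendsto_self_mul_const_pow_of_lt_one hr₀ hr₁).const_mul 2).add
    (tendsto_pow_atTop_nhds_zero_of_lt_one hr₀ hr₁)
  exact (h.congr fun i => by ring).bddAbove_range

section Generators

variable {x : UqH →L[ℂ] UqH} {a : ℕ → ℤ → ℤ → ℂ}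

lemma mem_boundedCommutatorAlgebra_of_shift_fst {C : ℝ}
    (hx : ∀ i j k, x (e i j k) = a i j k • e (i + 1) j k) (ha : ∀ i j k, ‖a i j k‖ ≤ C) :
    x ∈ boundedCommutatorAlgebra dEig₃ := by
  refine mem_boundedCommutatorAlgebra_of_apply_single (σ := fun m => (m.1 + 1, m.2)) (C := C)
    (fun m n h => by simpa [Prod.ext_iff] using h) (fun m => hx m.1 m.2.1 m.2.2) fun m => ?_
  rw [norm_mul, dEig₃, dEig₃, dEig_succ_fst_sub]
  split_ifs <;> simpa using ha m.1 m.2.1 m.2.2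

lemma mem_boundedCommutatorAlgebra_of_shift_snd {r : ℝ} (hr₀ : 0 ≤ r) (hr₁ : r < 1)
    (hx : ∀ i j k, x (e i j k) = a i j k • e i (j + 1) k) (ha : ∀ i j k, ‖a i j k‖ ≤ r ^ i) :
    x ∈ boundedCommutatorAlgebra dEig₃ := by
  obtain ⟨C, hC⟩ := bddAbove_range_two_mul_add_one_mul_pow hr₀ hr₁
  refine mem_boundedCommutatorAlgebra_of_apply_single
    (σ := fun m => (m.1, m.2.1 + 1, m.2.2)) (C := C)
    (fun m n h => by simpa [Prod.ext_iff] using h) (fun m => hx m.1 m.2.1 m.2.2) fun m => ?_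
  rw [norm_mul, dEig₃, dEig₃]
  exact (mul_le_mul (norm_dEig_succ_snd_sub_le _ _ _) (ha _ _ _) (norm_nonneg _)
    (by positivity)).trans (hC ⟨m.1, rfl⟩)

lemma mem_boundedCommutatorAlgebra_of_shift_thd {C : ℝ}
    (hx : ∀ i j k, x (e i j k) = a i j k • e i j (k + 1)) (ha : ∀ i j k, ‖a i j k‖ ≤ C) :
    x ∈ boundedCommutatorAlgebra dEig₃ := by
  refine mem_boundedCommutatorAlgebra_of_apply_single
    (σ := fun m => (m.1, m.2.1, m.2.2 + 1)) (C := C)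
    (fun m n h => by simpa [Prod.ext_iff] using h) (fun m => hx m.1 m.2.1 m.2.2) fun m => ?_
  simpa [dEig₃, dEig_succ_thd_sub] using ha m.1 m.2.1 m.2.2

end Generators

theorem commutators_with_Dirac_bounded_general
    (q : ℂ) (hq1 : ‖q‖ < 1)
    (θ : ℝ)
    (A B D : UqH →L[ℂ] UqH)
    (hA : ∀ (i : ℕ) (j k : ℤ),
      A (e i j k) = ((Real.sqrt (1 - ‖q‖ ^ (2 * (i + 1))) : ℝ) : ℂ) • e (i + 1) j k)
    (hB : ∀ (i : ℕ) (j k : ℤ), B (e i j k) = (q ^ i) • e i (j + 1) k)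
    (hD : ∀ (i : ℕ) (j k : ℤ),
      D (e i j k) = Complex.exp (-(2 * (Real.pi : ℂ) * (θ : ℂ) * (j : ℂ)) * Complex.I) • e i j (k + 1))
    (x : UqH →L[ℂ] UqH) (hx : x ∈ StarAlgebra.adjoin ℂ ({A, B, D} : Set (UqH →L[ℂ] UqH))) :
    ∃ S S' : UqH →L[ℂ] UqH,
      ∀ (i : ℕ) (j k : ℤ) (i' : ℕ) (j' k' : ℤ),
        (⟪e i' j' k', S (e i j k)⟫_ℂ =
          (dEig i' j' k' - dEig i j k) * ⟪e i' j' k', x (e i j k)⟫_ℂ) ∧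
        (⟪e i' j' k', S' (e i j k)⟫_ℂ =
          ((starRingEnd ℂ) (dEig i' j' k') - (starRingEnd ℂ) (dEig i j k)) *
            ⟪e i' j' k', x (e i j k)⟫_ℂ) := by
  have hA_mem : A ∈ boundedCommutatorAlgebra dEig₃ :=
    mem_boundedCommutatorAlgebra_of_shift_fst hA fun i _ _ => by
      rw [Complex.norm_real, Real.norm_of_nonneg (Real.sqrt_nonneg _)]
      exact Real.sqrt_le_one.mpr (by simp)
  have hB_mem : B ∈ boundedCommutatorAlgebra dEig₃ :=
    mem_boundedCommutatorAlgebra_of_shift_snd (norm_nonneg q) hq1 hB fun i _ _ => (norm_pow q i).le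
  have hD_mem : D ∈ boundedCommutatorAlgebra dEig₃ :=
    mem_boundedCommutatorAlgebra_of_shift_thd (C := 1) hD fun _ _ _ => by simp [Complex.norm_exp]
  obtain ⟨⟨S, hS⟩, S', hS'⟩ := StarAlgebra.adjoin_le
    (S := boundedCommutatorAlgebra dEig₃) (by simp [Set.insert_subset_iff, *]) hx
  exact ⟨S, S', fun i j k i' j' k' =>
    ⟨by simpa only [e, dEig₃, lp.inner_single_one_left] using hS (i, j, k) (i', j', k'),
      by simpa only [e, dEig₃, lp.inner_single_one_left] using hS' (i, j, k) (i', j', k')⟩⟩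

/-- for every `x` in the star-algebra generated by `A, B, D` and `1`, the
commutators `[T, x]` and `[T*, x]` with the unbounded diagonal operator
`T : e_{i,j,k} ↦ d(i,j,k)·e_{i,j,k}` extend to bounded operators `S`, `S′` on `H`. -/
theorem commutators_with_Dirac_bounded
    (q : ℂ) (hq0 : 0 < ‖q‖) (hq1 : ‖q‖ < 1)
    (θ : ℝ) (hθ : θ = Complex.arg q / Real.pi)
    (A B D : UqH →L[ℂ] UqH)
    (hA : ∀ (i : ℕ) (j k : ℤ),
      A (e i j k) = ((Real.sqrt (1 - ‖q‖ ^ (2 * (i + 1))) : ℝ) : ℂ) • e (i + 1) j k)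
    (hB : ∀ (i : ℕ) (j k : ℤ), B (e i j k) = (q ^ i) • e i (j + 1) k)
    (hD : ∀ (i : ℕ) (j k : ℤ),
      D (e i j k) = Complex.exp (-(2 * (Real.pi : ℂ) * (θ : ℂ) * (j : ℂ)) * Complex.I) • e i j (k + 1))
    (x : UqH →L[ℂ] UqH) (hx : x ∈ StarAlgebra.adjoin ℂ ({A, B, D} : Set (UqH →L[ℂ] UqH))) :
    ∃ S S' : UqH →L[ℂ] UqH,
      ∀ (i : ℕ) (j k : ℤ) (i' : ℕ) (j' k' : ℤ),
        (⟪e i' j' k', S (e i j k)⟫_ℂ =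
          (dEig i' j' k' - dEig i j k) * ⟪e i' j' k', x (e i j k)⟫_ℂ) ∧
        (⟪e i' j' k', S' (e i j k)⟫_ℂ =
          ((starRingEnd ℂ) (dEig i' j' k') - (starRingEnd ℂ) (dEig i j k)) *
            ⟪e i' j' k', x (e i j k)⟫_ℂ) :=
  commutators_with_Dirac_bounded_general q hq1 θ A B D hA hB hD x hx
end
end

section
/- There exists a constant C > 0 such that for every real R ≥ 2, Σ_{(i,j,k) ∈ ℕ×ℤ×ℤ, (i,j,k) ≠ (0,0,0), (i+|j|)² + k² ≤ R} ((i + |j|)² + k²)^{−3/2} ≤ C·log R. (This expresses that |𝒟|^{−3} belongs to the Dixmier ideal L^{(1,∞)}, i.e., the spectral triple is 3⁺-summable, since the nonzero eigenvalues of |𝒟| are √((i+|j|)² + k²).) -/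
noncomputable section

/-!
Group the lattice points into shells on which `n = i + |j| + |k|` is constant. The shell `n = m`
has at most `(2m + 1)²` points, since `(j, k)` determines `i`, and on it
`(i + |j|)² + k² ≥ m² / 2 ≥ (m / 2)²`, so the shell contributes `O(1 / m)`. Only shells with
`m ≤ √(2R)` meet the region, so the sum is `O(harmonic √(2R)) = O(log R)`.
-/

open Finset Real

/-- `|d(i,j,k)|²`, the square of an eigenvalue of `|𝒟|`. -/
def diracSq (p : ℕ × ℤ × ℤ) : ℝ := ((p.1 : ℝ) + |(p.2.1 : ℝ)|) ^ 2 + (p.2.2 : ℝ) ^ 2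

def latticeNorm (p : ℕ × ℤ × ℤ) : ℕ := p.1 + p.2.1.natAbs + p.2.2.natAbs

lemma latticeNorm_pos {p : ℕ × ℤ × ℤ} (hp : p ≠ 0) : 0 < latticeNorm p := by
  obtain ⟨i, j, k⟩ := p
  simp only [latticeNorm]
  by_contra h
  obtain ⟨rfl, rfl, rfl⟩ : i = 0 ∧ j = 0 ∧ k = 0 := by omega
  exact hp rfl

lemma sq_latticeNorm_le_two_mul_diracSq (p : ℕ × ℤ × ℤ) :
    (latticeNorm p : ℝ) ^ 2 ≤ 2 * diracSq p := by
  have hn : (latticeNorm p : ℝ) = ((p.1 : ℝ) + |(p.2.1 : ℝ)|) + |(p.2.2 : ℝ)| := by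
    simp only [latticeNorm]; push_cast [Nat.cast_natAbs]; ring
  rw [hn, diracSq, ← sq_abs (p.2.2 : ℝ)]
  nlinarith [sq_nonneg (((p.1 : ℝ) + |(p.2.1 : ℝ)|) - |(p.2.2 : ℝ)|)]

lemma latticeNorm_le_floor_sqrt {p : ℕ × ℤ × ℤ} {R : ℝ} (hp : diracSq p ≤ R) :
    latticeNorm p ≤ ⌊√(2 * R)⌋₊ := by
  apply Nat.le_floor
  apply Real.le_sqrt_of_sq_le
  linarith [sq_latticeNorm_le_two_mul_diracSq p]

lemma rpow_neg_three_halves_le {x a : ℝ} (ha : 0 < a) (h : a ^ 2 ≤ x) :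
    x ^ (-(3 / 2) : ℝ) ≤ (a ^ 3)⁻¹ := by
  calc x ^ (-(3 / 2) : ℝ) ≤ (a ^ 2) ^ (-(3 / 2) : ℝ) :=
        Real.rpow_le_rpow_of_nonpos (by positivity) h (by norm_num)
    _ = (a ^ 3)⁻¹ := by
        rw [← Real.rpow_natCast_mul ha.le, ← Real.rpow_natCast, ← Real.rpow_neg ha.le]
        norm_num

lemma diracSq_rpow_le {p : ℕ × ℤ × ℤ} {m : ℕ} (hm : 0 < m) (hp : latticeNorm p = m) :
    diracSq p ^ (-(3 / 2) : ℝ) ≤ 8 / (m : ℝ) ^ 3 := by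
  have hsq : ((m : ℝ) / 2) ^ 2 ≤ diracSq p := by
    have := sq_latticeNorm_le_two_mul_diracSq p
    rw [hp] at this
    nlinarith [sq_nonneg (m : ℝ)]
  calc diracSq p ^ (-(3 / 2) : ℝ) ≤ (((m : ℝ) / 2) ^ 3)⁻¹ :=
        rpow_neg_three_halves_le (by positivity) hsq
    _ = 8 / (m : ℝ) ^ 3 := by ring

lemma card_filter_latticeNorm_eq_le (t : Finset (ℕ × ℤ × ℤ)) (m : ℕ) :
    #{p ∈ t | latticeNorm p = m} ≤ (2 * m + 1) ^ 2 := by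
  calc #{p ∈ t | latticeNorm p = m}
      ≤ #(Icc (-(m : ℤ)) m ×ˢ Icc (-(m : ℤ)) m) := by
        apply card_le_card_of_injOn (fun p => p.2)
        · intro p hp
          have := (mem_filter.mp hp).2
          simp only [latticeNorm] at this
          simp only [coe_product, Set.mem_prod, coe_Icc, Set.mem_Icc]
          omega
        · intro p hp q hq hpq
          have hp' := (mem_filter.mp hp).2
          have hq' := (mem_filter.mp hq).2
          simp only [latticeNorm] at hp' hq'
          have hjk : p.2 = q.2 := hpq
          have hi : p.1 = q.1 := by rw [hjk] at hp'; omega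
          exact Prod.ext hi hjk
    _ = (2 * m + 1) ^ 2 := by
        rw [card_product, Int.card_Icc, sq]
        congr 1 <;> omega

lemma sum_filter_latticeNorm_eq_le (t : Finset (ℕ × ℤ × ℤ)) {m : ℕ} (hm : 0 < m) :
    ∑ p ∈ t with latticeNorm p = m, diracSq p ^ (-(3 / 2) : ℝ) ≤ 72 / m := by
  have hm' : (1 : ℝ) ≤ m := by exact_mod_cast hm
  calc ∑ p ∈ t with latticeNorm p = m, diracSq p ^ (-(3 / 2) : ℝ)
      ≤ #{p ∈ t | latticeNorm p = m} • (8 / (m : ℝ) ^ 3) :=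
        sum_le_card_nsmul _ _ _ fun p hp => diracSq_rpow_le hm (mem_filter.mp hp).2
    _ ≤ (2 * m + 1) ^ 2 • (8 / (m : ℝ) ^ 3) :=
        nsmul_le_nsmul_left (by positivity) (card_filter_latticeNorm_eq_le t m)
    _ ≤ 72 / m := by
        rw [nsmul_eq_mul, mul_div_assoc', div_le_div_iff₀ (by positivity) (by positivity)]
        push_cast
        have : (2 * (m : ℝ) + 1) ^ 2 ≤ 9 * (m : ℝ) ^ 2 := by nlinarith
        nlinarith [pow_pos (by linarith : (0 : ℝ) < m) 2]

lemma Finset.sum_le_mul_harmonic {ι : Type*} (s : Finset ι) (f : ι → ℝ) (g : ι → ℕ) {M : ℕ}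
    {c : ℝ} (hg : ∀ i ∈ s, g i ∈ Icc 1 M) (hf : ∀ m ∈ Icc 1 M, ∑ i ∈ s with g i = m, f i ≤ c / m) :
    ∑ i ∈ s, f i ≤ c * harmonic M := by
  rw [← sum_fiberwise_of_maps_to hg, harmonic_eq_sum_Icc]
  push_cast
  rw [mul_sum]
  exact sum_le_sum fun m hm => (hf m hm).trans_eq (div_eq_mul_inv c m)

lemma harmonic_floor_sqrt_two_mul_le {R : ℝ} (hR : 2 ≤ R) :
    (harmonic ⌊√(2 * R)⌋₊ : ℝ) ≤ 3 * log R := by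
  have hlog2 : 0.6931471803 < log 2 := Real.log_two_gt_d9
  have hlogR : log 2 ≤ log R := Real.log_le_log (by norm_num) hR
  have hpos : 0 < ⌊√(2 * R)⌋₊ :=
    Nat.floor_pos.mpr (Real.one_le_sqrt.mpr (by linarith))
  have hlogM : log ⌊√(2 * R)⌋₊ ≤ (log 2 + log R) / 2 := by
    calc log ⌊√(2 * R)⌋₊ ≤ log √(2 * R) :=
          Real.log_le_log (by exact_mod_cast hpos) (Nat.floor_le (Real.sqrt_nonneg _))
      _ = (log 2 + log R) / 2 := by
          rw [Real.log_sqrt (by linarith), Real.log_mul (by norm_num) (by linarith)]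
  linarith [harmonic_le_one_add_log ⌊√(2 * R)⌋₊]

lemma sum_diracSq_rpow_le (t : Finset (ℕ × ℤ × ℤ)) {R : ℝ} (hR : 2 ≤ R)
    (ht : ∀ p ∈ t, p ≠ 0 ∧ diracSq p ≤ R) :
    ∑ p ∈ t, diracSq p ^ (-(3 / 2) : ℝ) ≤ 216 * log R := by
  have hshells : ∀ p ∈ t, latticeNorm p ∈ Icc 1 ⌊√(2 * R)⌋₊ := fun p hp =>
    mem_Icc.mpr ⟨latticeNorm_pos (ht p hp).1, latticeNorm_le_floor_sqrt (ht p hp).2⟩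
  calc ∑ p ∈ t, diracSq p ^ (-(3 / 2) : ℝ) ≤ 72 * harmonic ⌊√(2 * R)⌋₊ :=
        t.sum_le_mul_harmonic _ _ hshells fun m hm =>
          sum_filter_latticeNorm_eq_le t (mem_Icc.mp hm).1
    _ ≤ 216 * log R := by linarith [harmonic_floor_sqrt_two_mul_le hR]

/-- there is a constant `C > 0` such that for every `R ≥ 2`,
`∑_{(i,j,k) ≠ 0, (i+|j|)² + k² ≤ R} ((i+|j|)² + k²)^{−3/2} ≤ C·log R`.
This expresses that `|𝒟|⁻³` lies in the Dixmier ideal `L^{(1,∞)}`, i.e. the spectral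
triple is `3⁺`-summable, the nonzero eigenvalues of `|𝒟|` being `√((i+|j|)² + k²)`. -/
theorem dirac_three_plus_summable :
    ∃ C : ℝ, 0 < C ∧ ∀ R : ℝ, 2 ≤ R →
      (∑' p : {p : ℕ × ℤ × ℤ // p ≠ ((0 : ℕ), (0 : ℤ), (0 : ℤ)) ∧
          ((p.1 : ℝ) + |(p.2.1 : ℝ)|) ^ 2 + (p.2.2 : ℝ) ^ 2 ≤ R},
        ((((p : ℕ × ℤ × ℤ).1 : ℝ) + |((p : ℕ × ℤ × ℤ).2.1 : ℝ)|) ^ 2 +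
            ((p : ℕ × ℤ × ℤ).2.2 : ℝ) ^ 2) ^ (-(3 / 2) : ℝ))
        ≤ C * Real.log R := by
  refine ⟨216, by norm_num, fun R hR => ?_⟩
  have hlogR : 0 ≤ log R := Real.log_nonneg (by linarith)
  refine tsum_le_of_sum_le' (by positivity) fun s => ?_
  refine (sum_map s (Function.Embedding.subtype _) fun p => diracSq p ^ (-(3 / 2) : ℝ)).symm
    |>.trans_le (sum_diracSq_rpow_le _ hR fun p hp => ?_)
  obtain ⟨q, -, rfl⟩ := mem_map.mp hp
  exact q.2
end
end
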